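/- arXiv:math/0310332 — 6 statements merged into one kernel-verified Lean document; each statement's English description precedes it below -/
import Mathlib

section
/- Let r ≥ 2 and let n₁ ≥ n₂ ≥ … ≥ n_r ≥ 1 with n = n₁ + n₂ + … + n_r. If 3·n₁ > 2·n, then the isometric path number of the complete r-partite graph K_{n₁,n₂,…,n_r} equals ⌈n₁/2⌉. -/
/-!
Every vertex of `K_{n₁,…,n_r}` is at distance at most two from every other, so an isometric path
has at most three vertices and, the parts being independent, meets the largest part in at most two
of them: at least `⌈n₁/2⌉` paths are needed. Conversely, pair up the vertices of the largest part
and join each pair through a vertex outside it; when `3n₁ > 2n` there are at most `⌊n₁/2⌋` outside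
vertices, so each of them can serve as the middle vertex of one of these `⌈n₁/2⌉` paths.
-/

open SimpleGraph

/-- A walk is an *isometric path* if it is a path whose length equals the
distance in `G` between its two endpoints (i.e. a shortest path). -/
def SimpleGraph.Walk.IsIsometricPath {V : Type*} {G : SimpleGraph V} {u v : V}
    (p : G.Walk u v) : Prop :=
  p.IsPath ∧ p.length = G.dist u v

/-- The *isometric path number* of `G`: the minimum number of isometric paths
needed to cover all vertices of `G`. -/
noncomputable def isometricPathNumber {V : Type*} (G : SimpleGraph V) : ℕ :=
  sInf {k | ∃ (u v : Fin k → V) (p : ∀ i, G.Walk (u i) (v i)),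
    (∀ i, (p i).IsIsometricPath) ∧ ∀ w : V, ∃ i, w ∈ (p i).support}

open Finset

namespace SimpleGraph

variable {V : Type*} {G : SimpleGraph V} {u v : V}

def HasIsometricPathCover (G : SimpleGraph V) (k : ℕ) : Prop :=
  ∃ (u v : Fin k → V) (p : ∀ i, G.Walk (u i) (v i)),
    (∀ i, (p i).IsIsometricPath) ∧ ∀ w : V, ∃ i, w ∈ (p i).support

theorem isometricPathNumber_le {k : ℕ} (h : G.HasIsometricPathCover k) :
    isometricPathNumber G ≤ k :=
  Nat.sInf_le h

theorem Walk.isIsometricPath_iff (p : G.Walk u v) :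
    p.IsIsometricPath ↔ p.length = G.dist u v :=
  ⟨And.right, fun h => ⟨p.isPath_of_length_eq_dist h, h⟩⟩

theorem Walk.exists_forall_mem_support_of_length_le_two {s : Set V} (hs : G.IsIndepSet s)
    (p : G.Walk u v) (hp : p.length ≤ 2) :
    ∃ x, ∀ w ∈ p.support, w ∈ s → w = x ∨ w = v := by
  match p, hp with
  | .nil, _ => exact ⟨u, by simp⟩
  | .cons _ .nil, _ => exact ⟨u, by simp⟩
  | .cons (v := x) hux (.cons _ .nil), _ =>
    by_cases hx : x ∈ s
    · have hu : u ∉ s := fun hu => hs hu hx hux.ne hux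
      exact ⟨x, by simp only [Walk.support_cons, Walk.support_nil, List.mem_cons,
        List.not_mem_nil, or_false]; rintro w (rfl | rfl | rfl) hw <;> simp_all⟩
    · exact ⟨u, by simp only [Walk.support_cons, Walk.support_nil, List.mem_cons,
        List.not_mem_nil, or_false]; rintro w (rfl | rfl | rfl) hw <;> simp_all⟩

theorem Walk.card_filter_mem_support_le_two [DecidableEq V] {s : Finset V}
    (hs : G.IsIndepSet s) (p : G.Walk u v) (hp : p.length ≤ 2) :
    #{w ∈ s | w ∈ p.support} ≤ 2 := by
  obtain ⟨x, hx⟩ := p.exists_forall_mem_support_of_length_le_two hs hp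
  refine (card_le_card fun w hw => ?_).trans (card_le_two (a := x) (b := v))
  rw [mem_filter] at hw
  simpa using hx w hw.2 hw.1

theorem HasIsometricPathCover.card_le_two_mul [DecidableEq V] {k : ℕ}
    (hdiam : ∀ u v, G.dist u v ≤ 2) {s : Finset V} (hs : G.IsIndepSet s)
    (h : G.HasIsometricPathCover k) : #s ≤ 2 * k := by
  obtain ⟨u, v, p, hp, hcover⟩ := h
  calc #s ≤ #(univ.biUnion fun i => {w ∈ s | w ∈ (p i).support}) := by
        refine card_le_card fun w hw => ?_
        obtain ⟨i, hi⟩ := hcover w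
        exact mem_biUnion.mpr ⟨i, mem_univ i, mem_filter.mpr ⟨hw, hi⟩⟩
    _ ≤ ∑ i, #{w ∈ s | w ∈ (p i).support} := card_biUnion_le
    _ ≤ ∑ _i : Fin k, 2 := sum_le_sum fun i _ =>
        (p i).card_filter_mem_support_le_two hs ((hp i).2 ▸ hdiam (u i) (v i))
    _ = 2 * k := by simp [mul_comm]

end SimpleGraph

namespace completeMultipartiteGraph

variable {ι : Type*}

section

variable {V : ι → Type*}

theorem isIndepSet_of_fst_eq {s : Set (Σ i, V i)} {i : ι} (hs : ∀ v ∈ s, v.1 = i) :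
    (completeMultipartiteGraph V).IsIndepSet s := fun x hx y hy _ hxy =>
  hxy (by simp [hs x hx, hs y hy])

theorem dist_le_two [Nontrivial ι] [∀ i, Nonempty (V i)] (u v : Σ i, V i) :
    (completeMultipartiteGraph V).dist u v ≤ 2 := by
  by_cases huv : u.1 = v.1
  · obtain ⟨j, hj⟩ := exists_ne u.1
    let b : Σ i, V i := ⟨j, Classical.arbitrary _⟩
    have hub : (completeMultipartiteGraph V).Adj u b := by simpa [b] using hj.symm
    have hbv : (completeMultipartiteGraph V).Adj b v := by simpa [b, ← huv] using hj
    exact dist_le (.cons hub (.cons hbv .nil))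
  · have huv' : (completeMultipartiteGraph V).Adj u v := by simpa using huv
    exact (dist_le huv'.toWalk).trans (by simp)

theorem exists_isIsometricPath_mem_support {u v b : Σ i, V i} (huv : u.1 = v.1) (hb : b.1 ≠ u.1) :
    ∃ p : (completeMultipartiteGraph V).Walk u v, p.IsIsometricPath ∧ (u ≠ v → b ∈ p.support) := by
  by_cases h : u = v
  · subst h
    exact ⟨.nil, ⟨Walk.IsPath.nil, by simp⟩, fun h => absurd rfl h⟩
  have hub : (completeMultipartiteGraph V).Adj u b := by simpa using hb.symm
  have hbv : (completeMultipartiteGraph V).Adj b v := by simpa [← huv] using hb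
  let p : (completeMultipartiteGraph V).Walk u v := .cons hub (.cons hbv .nil)
  refine ⟨p, ?_, fun _ => by simp [p]⟩
  have hlt : 1 < (completeMultipartiteGraph V).dist u v :=
    Reachable.one_lt_dist_of_ne_of_not_adj ⟨p⟩ h (by simpa using huv)
  have hle := dist_le p
  rw [Walk.isIsometricPath_iff]
  simp only [p, Walk.length_cons, Walk.length_nil] at hle ⊢
  omega

theorem card_le_two_mul_of_hasIsometricPathCover [Nontrivial ι] [∀ i, Fintype (V i)]
    [∀ i, Nonempty (V i)] (i : ι) {k : ℕ}
    (h : (completeMultipartiteGraph V).HasIsometricPathCover k) :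
    Fintype.card (V i) ≤ 2 * k := by
  classical
  simpa using h.card_le_two_mul (s := univ.map (Function.Embedding.sigmaMk i)) dist_le_two
    (isIndepSet_of_fst_eq (i := i) (by simp))

end

variable [Fintype ι] [DecidableEq ι] {n : ι → ℕ}

theorem hasIsometricPathCover_of_two_mul_sum_erase_le (i₀ : ι) (hm : ∃ j ≠ i₀, 0 < n j)
    (hsmall : 2 * ∑ i ∈ univ.erase i₀, n i ≤ n i₀) :
    (completeMultipartiteGraph fun i => Fin (n i)).HasIsometricPathCover ((n i₀ + 1) / 2) := by
  let O : Finset (Σ i, Fin (n i)) := (univ.erase i₀).sigma fun _ => univ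
  have hmemO : ∀ w, w ∈ O ↔ w.1 ≠ i₀ := by simp [O]
  have hcardO : #O = ∑ i ∈ univ.erase i₀, n i := by simp [O]
  obtain ⟨j, hj, hnj⟩ := hm
  -- Path `k` joins vertices `k` and `n i₀ - 1 - k` of part `i₀` through the `k`-th outside vertex
  -- (a single vertex when these coincide).
  let b (k : ℕ) : Σ i, Fin (n i) :=
    if hk : k < #O then (O.equivFin.symm ⟨k, hk⟩).1 else ⟨j, ⟨0, hnj⟩⟩
  have hb : ∀ k, (b k).1 ≠ i₀ := fun k => by
    unfold b; split_ifs
    exacts [(hmemO _).mp (Subtype.property _), hj]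
  have hpaths (k : Fin ((n i₀ + 1) / 2)) := exists_isIsometricPath_mem_support
    (u := ⟨i₀, ⟨k, by omega⟩⟩) (v := ⟨i₀, ⟨n i₀ - 1 - k, by omega⟩⟩) rfl (hb k)
  choose p hp hbp using hpaths
  refine ⟨_, _, p, hp, fun w => ?_⟩
  by_cases hw : w.1 = i₀
  · obtain ⟨i, a⟩ := w
    simp only at hw
    subst hw
    have := a.isLt
    by_cases ha : (a : ℕ) < (n i + 1) / 2
    · exact ⟨⟨a, ha⟩, Walk.start_mem_support _⟩
    · refine ⟨⟨n i - 1 - a, by omega⟩, ?_⟩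
      convert Walk.end_mem_support (p _) using 2
      exact Fin.ext (by simp only; omega)
  · obtain ⟨k, hk⟩ := O.equivFin.symm.surjective ⟨w, (hmemO w).mpr hw⟩
    have := k.isLt
    refine ⟨⟨k, by omega⟩, ?_⟩
    have hbk : b k = w := by simp [b, hk]
    exact hbk ▸ hbp _ (by simp only [ne_eq, Sigma.mk.injEq, heq_eq_eq, Fin.ext_iff]; omega)

end completeMultipartiteGraph

theorem stmt_0 (r : ℕ) (hr : 2 ≤ r) (n : Fin r → ℕ) (hpos : ∀ i, 1 ≤ n i)
    (N : ℕ) (hN : N = ∑ i, n i)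
    (h : 3 * n ⟨0, by omega⟩ > 2 * N) :
    isometricPathNumber (completeMultipartiteGraph (fun i : Fin r => Fin (n i))) =
      (n ⟨0, by omega⟩ + 1) / 2 := by
  set i₀ : Fin r := ⟨0, by omega⟩
  have : Nontrivial (Fin r) := Fin.nontrivial_iff_two_le.mpr hr
  have : ∀ i, Nonempty (Fin (n i)) := fun i => ⟨⟨0, hpos i⟩⟩
  have hsplit : n i₀ + ∑ i ∈ univ.erase i₀, n i = N := hN ▸ add_sum_erase _ _ (mem_univ i₀)
  obtain ⟨j, hj⟩ := exists_ne i₀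
  have hcover := completeMultipartiteGraph.hasIsometricPathCover_of_two_mul_sum_erase_le i₀
    ⟨j, hj, hpos j⟩ (by omega)
  refine le_antisymm (isometricPathNumber_le hcover) (le_csInf ⟨_, hcover⟩ fun k hk => ?_)
  have hlower := completeMultipartiteGraph.card_le_two_mul_of_hasIsometricPathCover i₀ hk
  rw [Fintype.card_fin] at hlower
  omega
end

section
/- Let r ≥ 2 and let n₁ ≥ n₂ ≥ … ≥ n_r ≥ 1 with n = n₁ + n₂ + … + n_r, and let α be the number of indices i with n_i odd. If 3·n₁ ≤ 2·n and 3·α ≤ n, then the isometric path number of the complete r-partite graph K_{n₁,n₂,…,n_r} equals ⌈n/3⌉. -/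
open SimpleGraph

lemma sigmaFinExt {ι : Type*} {g : ι → ℕ} {x y : Σ i, Fin (g i)}
    (h1 : x.1 = y.1) (h2 : (x.2 : ℕ) = (y.2 : ℕ)) : x = y := by
  obtain ⟨i, a⟩ := x
  obtain ⟨j, b⟩ := y
  dsimp at h1 h2
  subst h1
  exact congrArg (Sigma.mk i) (Fin.ext h2)

lemma card_fiber {ι : Type*} [Fintype ι] [DecidableEq ι] (g : ι → ℕ) (i : ι) :
    ((Finset.univ : Finset (Σ j, Fin (g j))).filter (fun x => x.1 = i)).card = g i := by
  have : ((Finset.univ : Finset (Σ j, Fin (g j))).filter (fun x => x.1 = i))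
      = (Finset.univ : Finset (Fin (g i))).map ⟨Sigma.mk i, sigma_mk_injective⟩ := by
    ext x
    simp only [Finset.mem_filter, Finset.mem_univ, true_and, Finset.mem_map,
      Function.Embedding.coeFn_mk]
    constructor
    · rintro h
      obtain ⟨j, b⟩ := x
      dsimp at h
      subst h
      exact ⟨b, rfl⟩
    · rintro ⟨b, rfl⟩; rfl
  rw [this, Finset.card_map, Finset.card_univ, Fintype.card_fin]

lemma sandwich {ι : Type*} [Fintype ι] (L U : ι → ℕ) (hLU : ∀ i, L i ≤ U i)
    (c : ℕ) (hL : ∑ i, L i ≤ c) (hU : c ≤ ∑ i, U i) :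
    ∃ t : ι → ℕ, (∀ i, L i ≤ t i) ∧ (∀ i, t i ≤ U i) ∧ ∑ i, t i = c := by
  classical
  obtain ⟨d, hd⟩ : ∃ d, c + d = ∑ i, U i := ⟨_, (Nat.add_sub_cancel' hU)⟩
  clear hU
  induction d generalizing c with
  | zero =>
    exact ⟨U, hLU, fun i => le_rfl, by omega⟩
  | succ d ih =>
    obtain ⟨t, h1, h2, h3⟩ := ih (c + 1) (by omega) (by omega)
    have hex : ∃ i, L i < t i := by
      by_contra h
      push_neg at h
      have : ∑ i, t i ≤ ∑ i, L i := Finset.sum_le_sum fun i _ => h i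
      omega
    obtain ⟨i, hi⟩ := hex
    refine ⟨Function.update t i (t i - 1), ?_, ?_, ?_⟩
    · intro j
      rcases eq_or_ne j i with rfl | hji
      · simp; omega
      · simpa [Function.update_of_ne hji] using h1 j
    · intro j
      rcases eq_or_ne j i with rfl | hji
      · simp; have := h2 j; omega
      · simpa [Function.update_of_ne hji] using h2 j
    · rw [Finset.sum_update_of_mem (Finset.mem_univ i), Finset.sdiff_singleton_eq_erase]
      rw [← Finset.sum_erase_add _ _ (Finset.mem_univ i)] at h3
      omega


lemma exists_iso2 {r : ℕ} {n : Fin r → ℕ}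
    (u v w : Σ i, Fin (n i)) (huv : u ≠ v) (hfst : u.1 = v.1) (hw : w.1 ≠ u.1) :
    ∃ p : (completeMultipartiteGraph (fun i => Fin (n i))).Walk u v,
      p.IsIsometricPath ∧ p.support = [u, w, v] := by
  have hadj1 : (completeMultipartiteGraph (fun i => Fin (n i))).Adj u w := by
    simp only [comap_adj, top_adj]
    exact fun h => hw h.symm
  have hadj2 : (completeMultipartiteGraph (fun i => Fin (n i))).Adj w v := by
    simp only [comap_adj, top_adj]
    rw [← hfst]
    exact hw
  refine ⟨Walk.cons hadj1 (Walk.cons hadj2 Walk.nil), ⟨?_, ?_⟩, ?_⟩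
  · rw [Walk.isPath_def]
    simp only [Walk.support_cons, Walk.support_nil]
    refine List.nodup_cons.mpr ⟨?_, List.nodup_cons.mpr ⟨?_, List.nodup_singleton _⟩⟩
    · simp only [List.mem_cons, List.mem_singleton, List.not_mem_nil]
      rintro (rfl | rfl | h)
      · exact hw rfl
      · exact huv rfl
      · exact h.elim
    · simp only [List.mem_cons, List.mem_singleton, List.not_mem_nil]
      rintro (rfl | h)
      · exact hw hfst.symm
      · exact h.elim
  · have hle : (completeMultipartiteGraph (fun i => Fin (n i))).dist u v ≤ 2 := by
      have := dist_le (Walk.cons hadj1 (Walk.cons hadj2 Walk.nil))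
      simpa using this
    have h0 : (completeMultipartiteGraph (fun i => Fin (n i))).dist u v ≠ 0 := by
      rw [Ne, dist_eq_zero_iff_eq_or_not_reachable]
      push_neg
      exact ⟨huv, ⟨Walk.cons hadj1 (Walk.cons hadj2 Walk.nil)⟩⟩
    have h1 : (completeMultipartiteGraph (fun i => Fin (n i))).dist u v ≠ 1 := by
      rw [Ne, dist_eq_one_iff_adj]
      simp only [comap_adj, top_adj]
      intro h
      exact h hfst
    simp only [Walk.length_cons, Walk.length_nil]
    omega
  · simp [Walk.support_cons]

lemma exists_iso1 {r : ℕ} {n : Fin r → ℕ}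
    (u v : Σ i, Fin (n i)) (hfst : u.1 ≠ v.1) :
    ∃ p : (completeMultipartiteGraph (fun i => Fin (n i))).Walk u v,
      p.IsIsometricPath ∧ p.support = [u, v] := by
  have hadj : (completeMultipartiteGraph (fun i => Fin (n i))).Adj u v := by
    simp only [comap_adj, top_adj]; exact hfst
  refine ⟨Walk.cons hadj Walk.nil, ⟨?_, ?_⟩, by simp⟩
  · rw [Walk.isPath_def]
    simp only [Walk.support_cons, Walk.support_nil]
    exact List.nodup_cons.mpr ⟨by simpa using hadj.ne, List.nodup_singleton _⟩
  · simp only [Walk.length_cons, Walk.length_nil]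
    exact (dist_eq_one_iff_adj.mpr hadj).symm

lemma exists_iso0 {V : Type*} (G : SimpleGraph V) (u : V) :
    ∃ p : G.Walk u u, p.IsIsometricPath ∧ p.support = [u] :=
  ⟨Walk.nil, ⟨Walk.IsPath.nil, by simp [SimpleGraph.dist_self]⟩, by simp⟩

lemma other_index {r : ℕ} (hr : 2 ≤ r) (i : Fin r) : ∃ j : Fin r, j ≠ i := by
  rcases eq_or_ne i ⟨0, by omega⟩ with h | h
  · exact ⟨⟨1, by omega⟩, by rw [h]; intro hc; simpa using congrArg Fin.val hc⟩
  · exact ⟨⟨0, by omega⟩, fun hc => h (hc ▸ rfl)⟩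

lemma dist_le_two {r : ℕ} (hr : 2 ≤ r) (n : Fin r → ℕ) (hpos : ∀ i, 1 ≤ n i)
    (u v : Σ i, Fin (n i)) :
    (completeMultipartiteGraph (fun i => Fin (n i))).dist u v ≤ 2 := by
  rcases eq_or_ne u v with rfl | huv
  · rw [SimpleGraph.dist_self]; omega
  rcases eq_or_ne u.1 v.1 with hfst | hfst
  · obtain ⟨j, hj⟩ := other_index hr u.1
    obtain ⟨p, hp, hsup⟩ := exists_iso2 u v ⟨j, ⟨0, hpos j⟩⟩ huv hfst (by exact hj)
    have hlen := congrArg List.length hsup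
    rw [Walk.length_support] at hlen
    simp at hlen
    have h2 := hp.2
    omega
  · obtain ⟨p, hp, hsup⟩ := exists_iso1 u v hfst
    have h2 := hp.2
    have hlen := congrArg List.length hsup
    rw [Walk.length_support] at hlen
    simp at hlen
    omega
lemma upper_mem {r : ℕ} (hr : 2 ≤ r) (n : Fin r → ℕ) (hpos : ∀ i, 1 ≤ n i)
    (t s : Fin r → ℕ) (hts : ∀ i, n i = 2 * t i + s i)
    (hhall : ∀ i, s i + t i ≤ ∑ j, s j)
    (hKS : ∑ i, t i ≤ ∑ i, s i)
    (hS2 : ∑ i, s i ≤ ∑ i, t i + 2)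
    (c : ℕ) (hKc : ∑ i, t i ≤ c) (hc2 : ∑ i, t i < ∑ i, s i → ∑ i, t i < c) :
    ∃ (u v : Fin c → Σ i, Fin (n i))
      (p : ∀ j, (completeMultipartiteGraph (fun i : Fin r => Fin (n i))).Walk (u j) (v j)),
      (∀ j, (p j).IsIsometricPath) ∧
      ∀ w : Σ i, Fin (n i), ∃ j, w ∈ (p j).support := by
  classical
  have cardP : Fintype.card (Σ i, Fin (t i)) = ∑ i, t i := by simp
  have cardM : Fintype.card (Σ i, Fin (s i)) = ∑ i, s i := by simp
  let e : (Σ i, Fin (t i)) ≃ Fin (∑ i, t i) := Fintype.equivFinOfCardEq cardP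
  have hall : ∀ A : Finset (Σ i, Fin (t i)),
      A.card ≤ (A.biUnion (fun q => Finset.univ.filter
        (fun x : Σ i, Fin (s i) => ¬ x.1 = q.1))).card := by
    intro A
    rcases A.eq_empty_or_nonempty with rfl | ⟨q0, hq0⟩
    · simp
    by_cases hA2 : ∃ q1 ∈ A, ¬ q1.1 = q0.1
    · obtain ⟨q1, hq1, hne⟩ := hA2
      have hsub : (Finset.univ : Finset (Σ i, Fin (s i))) ⊆ A.biUnion (fun q =>
          Finset.univ.filter (fun x : Σ i, Fin (s i) => ¬ x.1 = q.1)) := by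
        intro x _
        rcases eq_or_ne x.1 q0.1 with h | h
        · exact Finset.mem_biUnion.mpr ⟨q1, hq1,
            Finset.mem_filter.mpr ⟨Finset.mem_univ _, by rw [h]; exact fun hc => hne hc.symm⟩⟩
        · exact Finset.mem_biUnion.mpr ⟨q0, hq0,
            Finset.mem_filter.mpr ⟨Finset.mem_univ _, h⟩⟩
      have h1 : A.card ≤ ∑ i, t i := by
        have := Finset.card_le_card (Finset.subset_univ A)
        rwa [Finset.card_univ, cardP] at this
      have h2 := Finset.card_le_card hsub
      rw [Finset.card_univ, cardM] at h2
      omega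
    · push_neg at hA2
      have h1 : A.card ≤ t q0.1 := by
        rw [← card_fiber t q0.1]
        exact Finset.card_le_card (fun q hq =>
          Finset.mem_filter.mpr ⟨Finset.mem_univ _, hA2 q hq⟩)
      have h2 : ((Finset.univ : Finset (Σ i, Fin (s i))).filter
          (fun x => ¬ x.1 = q0.1)).card = (∑ i, s i) - s q0.1 := by
        have hpn := Finset.card_filter_add_card_filter_not
          (s := (Finset.univ : Finset (Σ i, Fin (s i)))) (p := fun x => x.1 = q0.1)
        have hcu : (Finset.univ : Finset (Σ i, Fin (s i))).card = ∑ i, s i := by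
          rw [Finset.card_univ, cardM]
        have hfib := card_fiber s q0.1
        omega
      have h4 := Finset.card_le_card (Finset.subset_biUnion_of_mem
        (fun q : Σ i, Fin (t i) => Finset.univ.filter
          (fun x : Σ i, Fin (s i) => ¬ x.1 = q.1)) hq0)
      beta_reduce at h4
      have h5 := hhall q0.1
      omega
  obtain ⟨f, finj, hfmem⟩ := (Finset.all_card_le_biUnion_card_iff_exists_injective
    (fun q : Σ i, Fin (t i) => Finset.univ.filter
      (fun x : Σ i, Fin (s i) => ¬ x.1 = q.1))).mp hall
  have hf : ∀ q, ¬ (f q).1 = q.1 := by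
    intro q
    have := hfmem q
    simp only [Finset.mem_filter] at this
    exact this.2
  have hnlt : ∀ x : Σ i, Fin (s i), 2 * t x.1 + (x.2 : ℕ) < n x.1 := by
    intro x; have := x.2.isLt; have := hts x.1; omega
  let mid : (Σ i, Fin (s i)) → Σ i, Fin (n i) :=
    fun x => ⟨x.1, ⟨2 * t x.1 + (x.2 : ℕ), hnlt x⟩⟩
  have hpAlt : ∀ q : Σ i, Fin (t i), 2 * (q.2 : ℕ) < n q.1 := by
    intro q; have := q.2.isLt; have := hts q.1; omega
  have hpBlt : ∀ q : Σ i, Fin (t i), 2 * (q.2 : ℕ) + 1 < n q.1 := by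
    intro q; have := q.2.isLt; have := hts q.1; omega
  let pA : (Σ i, Fin (t i)) → Σ i, Fin (n i) := fun q => ⟨q.1, ⟨2 * (q.2 : ℕ), hpAlt q⟩⟩
  let pB : (Σ i, Fin (t i)) → Σ i, Fin (n i) := fun q => ⟨q.1, ⟨2 * (q.2 : ℕ) + 1, hpBlt q⟩⟩
  have hKlt : (∃ x : Σ i, Fin (s i), ∀ q, ¬ f q = x) → ∑ i, t i < c := by
    rintro ⟨x, hx⟩
    apply hc2
    have himg : (Finset.univ.image f).card = ∑ i, t i := by
      rw [Finset.card_image_of_injective _ finj, Finset.card_univ, cardP]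
    have hsub : Finset.univ.image f ⊆ (Finset.univ : Finset (Σ i, Fin (s i))).erase x := by
      intro y hy
      obtain ⟨q, -, rfl⟩ := Finset.mem_image.mp hy
      exact Finset.mem_erase.mpr ⟨hx q, Finset.mem_univ _⟩
    have hcle := Finset.card_le_card hsub
    rw [Finset.card_erase_of_mem (Finset.mem_univ x), Finset.card_univ, cardM] at hcle
    have hS1 : 1 ≤ ∑ i, s i := by
      have : 0 < Fintype.card (Σ i, Fin (s i)) := Fintype.card_pos_iff.mpr ⟨x⟩
      omega
    omega
  have hmlt : ∀ w : Σ i, Fin (n i), ¬ (w.2 : ℕ) < 2 * t w.1 →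
      (w.2 : ℕ) - 2 * t w.1 < s w.1 := by
    intro w h; have := w.2.isLt; have := hts w.1; omega
  let B : (Σ i, Fin (n i)) → Fin c := fun w =>
    if h : (w.2 : ℕ) < 2 * t w.1 then
      Fin.castLE hKc (e ⟨w.1, ⟨(w.2 : ℕ) / 2, by have := hts w.1; omega⟩⟩)
    else
      if h2 : ∃ q, f q = (⟨w.1, ⟨(w.2 : ℕ) - 2 * t w.1, hmlt w h⟩⟩ : Σ i, Fin (s i)) then
        Fin.castLE hKc (e h2.choose)
      else
        ⟨∑ i, t i, hKlt ⟨⟨w.1, ⟨(w.2 : ℕ) - 2 * t w.1, hmlt w h⟩⟩, fun q hq => h2 ⟨q, hq⟩⟩⟩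
  have key : ∀ j : Fin c, ∃ z : (Σ (u : Σ i, Fin (n i)) (v : Σ i, Fin (n i)),
      (completeMultipartiteGraph (fun i : Fin r => Fin (n i))).Walk u v),
      z.2.2.IsIsometricPath ∧ ∀ w, B w = j → w ∈ z.2.2.support := by
    intro j
    by_cases hj : (j : ℕ) < ∑ i, t i
    · have hinv : ∀ Q : Σ i, Fin (t i), Fin.castLE hKc (e Q) = j →
          Q = e.symm ⟨(j : ℕ), hj⟩ := by
        intro Q hQ
        have h5 : ((e Q) : ℕ) = (j : ℕ) := by rw [← hQ]; rfl
        have h6 : e Q = ⟨(j : ℕ), hj⟩ := Fin.ext h5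
        rw [← h6, Equiv.symm_apply_apply]
      set q0 := e.symm ⟨(j : ℕ), hj⟩ with hq0def
      have huv : pA q0 ≠ pB q0 := by
        intro h
        have h7 := congrArg (fun z : Σ i, Fin (n i) => (z.2 : ℕ)) h
        simp only [pA, pB] at h7
        omega
      have hwfst : (mid (f q0)).1 ≠ (pA q0).1 := hf q0
      obtain ⟨p, hiso, hsup⟩ := exists_iso2 (pA q0) (pB q0) (mid (f q0)) huv rfl hwfst
      refine ⟨⟨pA q0, pB q0, p⟩, hiso, ?_⟩
      intro w hw
      simp only [B] at hw
      split_ifs at hw with hcase hex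
      · have hQ := hinv _ hw
        have hfst1 : w.1 = q0.1 := congrArg Sigma.fst hQ
        have hval1 : (w.2 : ℕ) / 2 = (q0.2 : ℕ) := by
          have h8 := congrArg (fun z : Σ i, Fin (t i) => (z.2 : ℕ)) hQ
          simpa using h8
        rw [hsup]
        have hor : w = pA q0 ∨ w = pB q0 := by
          rcases Nat.lt_or_ge (w.2 : ℕ) (2 * (q0.2 : ℕ) + 1) with h | h
          · left; exact sigmaFinExt hfst1 (by simp only [pA]; omega)
          · right; exact sigmaFinExt hfst1 (by simp only [pB]; omega)
        rcases hor with rfl | rfl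
        · simp
        · simp
      · have hQ := hinv _ hw
        have hspec := hex.choose_spec
        rw [hQ] at hspec
        have hf1 : (f q0).1 = w.1 := congrArg Sigma.fst hspec
        have hf2 : ((f q0).2 : ℕ) = (w.2 : ℕ) - 2 * t w.1 :=
          congrArg (fun z : Σ i, Fin (s i) => (z.2 : ℕ)) hspec
        have hwmid : w = mid (f q0) := by
          refine sigmaFinExt hf1.symm ?_
          simp only [mid]
          have ht1 : t (f q0).fst = t w.fst := congrArg t hf1
          omega
        rw [hsup, hwmid]
        simp
      · exfalso
        have h9 : (∑ i, t i) = (j : ℕ) := congrArg Fin.val hw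
        omega
    · have hlt : ∀ Q : Σ i, Fin (t i), Fin.castLE hKc (e Q) = j → False := by
        intro Q hQ
        have h5 : ((e Q) : ℕ) = (j : ℕ) := by rw [← hQ]; rfl
        have := (e Q).isLt
        omega
      set D := (Finset.univ : Finset (Σ i, Fin (s i))) \ Finset.univ.image f with hD
      have hDcard : D.card = (∑ i, s i) - ∑ i, t i := by
        rw [hD, Finset.card_sdiff_of_subset (Finset.subset_univ _), Finset.card_univ, cardM,
          Finset.card_image_of_injective _ finj, Finset.card_univ, cardP]
      have hmem : ∀ w, B w = j → ∃ x ∈ D, w = mid x := by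
        intro w hw
        simp only [B] at hw
        split_ifs at hw with hcase hex
        · exact absurd hw (fun hh => hlt _ hh)
        · exact absurd hw (fun hh => hlt _ hh)
        · refine ⟨⟨w.1, ⟨(w.2 : ℕ) - 2 * t w.1, hmlt w hcase⟩⟩, ?_, ?_⟩
          · rw [hD, Finset.mem_sdiff]
            refine ⟨Finset.mem_univ _, fun hc => ?_⟩
            obtain ⟨q, -, hq⟩ := Finset.mem_image.mp hc
            exact hex ⟨q, hq⟩
          · exact sigmaFinExt rfl (by simp only [mid]; omega)
      have hD2 : D.card ≤ 2 := by omega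
      obtain h0 | h1 | h2 : D.card = 0 ∨ D.card = 1 ∨ D.card = 2 := by omega
      · obtain ⟨p, hiso, -⟩ := exists_iso0
          (completeMultipartiteGraph (fun i : Fin r => Fin (n i)))
          ⟨⟨0, by omega⟩, ⟨0, hpos _⟩⟩
        refine ⟨⟨_, _, p⟩, hiso, ?_⟩
        intro w hw
        obtain ⟨x, hx, -⟩ := hmem w hw
        rw [Finset.card_eq_zero.mp h0] at hx
        exact absurd hx (Finset.notMem_empty x)
      · obtain ⟨x, hx⟩ := Finset.card_eq_one.mp h1
        obtain ⟨p, hiso, hsup⟩ := exists_iso0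
          (completeMultipartiteGraph (fun i : Fin r => Fin (n i))) (mid x)
        refine ⟨⟨_, _, p⟩, hiso, ?_⟩
        intro w hw
        obtain ⟨y, hy, rfl⟩ := hmem w hw
        rw [hx, Finset.mem_singleton] at hy
        rw [hsup, hy]
        simp
      · obtain ⟨x, y, hxy, hDxy⟩ := Finset.card_eq_two.mp h2
        by_cases hfst : x.1 = y.1
        · have hmxy : mid x ≠ mid y := by
            intro h
            apply hxy
            apply sigmaFinExt hfst
            have h7 := congrArg (fun z : Σ i, Fin (n i) => (z.2 : ℕ)) h
            simp only [mid] at h7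
            have ht1 : t x.fst = t y.fst := congrArg t hfst
            omega
          obtain ⟨jo, hjo⟩ := other_index hr (mid x).1
          obtain ⟨p, hiso, hsup⟩ := exists_iso2 (mid x) (mid y) ⟨jo, ⟨0, hpos jo⟩⟩
            hmxy hfst hjo
          refine ⟨⟨_, _, p⟩, hiso, ?_⟩
          intro w hw
          obtain ⟨z, hz, rfl⟩ := hmem w hw
          rw [hDxy] at hz
          rcases Finset.mem_insert.mp hz with rfl | hz2
          · rw [hsup]; simp
          · rw [Finset.mem_singleton] at hz2
            rw [hsup, hz2]; simp
        · obtain ⟨p, hiso, hsup⟩ := exists_iso1 (mid x) (mid y) hfst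
          refine ⟨⟨_, _, p⟩, hiso, ?_⟩
          intro w hw
          obtain ⟨z, hz, rfl⟩ := hmem w hw
          rw [hDxy] at hz
          rcases Finset.mem_insert.mp hz with rfl | hz2
          · rw [hsup]; simp
          · rw [Finset.mem_singleton] at hz2
            rw [hsup, hz2]; simp
  choose F hF1 hF2 using key
  exact ⟨fun j => (F j).1, fun j => (F j).2.1, fun j => (F j).2.2,
    fun j => hF1 j, fun w => ⟨B w, hF2 (B w) w rfl⟩⟩
lemma sum3_le {r : ℕ} (g : Fin r → ℕ) (a b c : Fin r) (hab : a ≠ b) (hac : a ≠ c)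
    (hbc : b ≠ c) : g a + g b + g c ≤ ∑ i, g i := by
  classical
  have h := Finset.sum_le_sum_of_subset (Finset.subset_univ ({a, b, c} : Finset (Fin r)))
    (f := g)
  rw [Finset.sum_insert (by simp [hab, hac]), Finset.sum_insert (by simp [hbc]),
    Finset.sum_singleton] at h
  omega

lemma sum2_le {r : ℕ} (g : Fin r → ℕ) (a b : Fin r) (hab : a ≠ b) :
    g a + g b ≤ ∑ i, g i := by
  classical
  have h := Finset.sum_le_sum_of_subset (Finset.subset_univ ({a, b} : Finset (Fin r)))
    (f := g)
  rw [Finset.sum_insert (by simp [hab]), Finset.sum_singleton] at h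
  omega

set_option maxHeartbeats 1000000 in
theorem stmt_2 (r : ℕ) (hr : 2 ≤ r) (n : Fin r → ℕ) (hpos : ∀ i, 1 ≤ n i)
    (hsorted : Antitone n) (N : ℕ) (hN : N = ∑ i, n i)
    (α : ℕ) (hα : α = (Finset.univ.filter fun i => Odd (n i)).card)
    (h1 : 3 * n ⟨0, by omega⟩ ≤ 2 * N) (h2 : 3 * α ≤ N) :
    isometricPathNumber (completeMultipartiteGraph (fun i : Fin r => Fin (n i))) =
      (N + 2) / 3 := by
  classical
  have hcardV : Fintype.card (Σ i : Fin r, Fin (n i)) = N := by simp [hN]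
  -- lower bound
  have hlow : ∀ x ∈ {k | ∃ (u v : Fin k → Σ i : Fin r, Fin (n i))
      (p : ∀ i, (completeMultipartiteGraph (fun i : Fin r => Fin (n i))).Walk (u i) (v i)),
      (∀ i, (p i).IsIsometricPath) ∧ ∀ w, ∃ i, w ∈ (p i).support}, (N + 2) / 3 ≤ x := by
    rintro x ⟨u, v, p, hiso, hcov⟩
    have hsub : (Finset.univ : Finset (Σ i : Fin r, Fin (n i))) ⊆
        Finset.univ.biUnion (fun j : Fin x => (p j).support.toFinset) := by
      intro w _
      obtain ⟨j, hj⟩ := hcov w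
      exact Finset.mem_biUnion.mpr ⟨j, Finset.mem_univ _, List.mem_toFinset.mpr hj⟩
    have hcard := Finset.card_le_card hsub
    rw [Finset.card_univ, hcardV] at hcard
    have hbi := Finset.card_biUnion_le (s := (Finset.univ : Finset (Fin x)))
      (t := fun j => (p j).support.toFinset)
    have hsum : ∑ j : Fin x, (p j).support.toFinset.card ≤ ∑ j : Fin x, 3 := by
      refine Finset.sum_le_sum fun j _ => ?_
      have ht1 := (p j).support.toFinset_card_le
      have ht2 : (p j).support.length = (p j).length + 1 := Walk.length_support _
      have ht3 : (p j).length ≤ 2 := by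
        rw [(hiso j).2]; exact dist_le_two hr n hpos _ _
      omega
    have hx3 : ∑ j : Fin x, 3 = 3 * x := by simp [mul_comm]
    omega
  -- choose the numbers t i
  have hn0 : ∀ i : Fin r, n i ≤ n ⟨0, by omega⟩ := fun i =>
    hsorted (by simp [Fin.le_def])
  have h3n : ∀ i : Fin r, 3 * n i ≤ 2 * N := fun i => le_trans (by have := hn0 i; omega) h1
  have hne01 : (⟨0, by omega⟩ : Fin r) ≠ ⟨1, by omega⟩ := by
    intro hc; have := congrArg Fin.val hc; simp at this
  have hLU0 : ∀ i : Fin r, n i - (N / 3 + N % 3) ≤ n i / 2 := by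
    intro i
    have := h3n i
    omega
  have hsumL0 : ∑ i : Fin r, (n i - (N / 3 + N % 3)) ≤ N / 3 := by
    have hzero : ∀ x ∈ Finset.univ, x ∉ ({⟨0, by omega⟩, ⟨1, by omega⟩} : Finset (Fin r)) →
        n x - (N / 3 + N % 3) = 0 := by
      intro x _ hx
      simp only [Finset.mem_insert, Finset.mem_singleton] at hx
      push_neg at hx
      obtain ⟨hx0, hx1⟩ := hx
      have hxv : 2 ≤ (x : ℕ) := by
        rcases Nat.lt_or_ge (x : ℕ) 2 with h | h
        · exfalso
          interval_cases hv : (x : ℕ)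
          · exact hx0 (Fin.ext (show (x : ℕ) = 0 by omega))
          · exact hx1 (Fin.ext (show (x : ℕ) = 1 by omega))
        · exact h
      have hle1 : n x ≤ n ⟨1, by omega⟩ := hsorted (by simp [Fin.le_def]; omega)
      have hle0 : n ⟨1, by omega⟩ ≤ n ⟨0, by omega⟩ := hsorted (by simp [Fin.le_def])
      have hxne0 : (⟨0, by omega⟩ : Fin r) ≠ x := fun hc => hx0 hc.symm
      have hxne1 : (⟨1, by omega⟩ : Fin r) ≠ x := fun hc => hx1 hc.symm
      have h3 := sum3_le n ⟨0, by omega⟩ ⟨1, by omega⟩ x hne01 hxne0 hxne1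
      rw [← hN] at h3
      omega
    have hpairsum : ∑ i : Fin r, (n i - (N / 3 + N % 3)) =
        (n ⟨0, by omega⟩ - (N / 3 + N % 3)) + (n ⟨1, by omega⟩ - (N / 3 + N % 3)) := by
      rw [← Finset.sum_subset (Finset.subset_univ _) hzero, Finset.sum_pair hne01]
    rw [hpairsum]
    have h2le := sum2_le n ⟨0, by omega⟩ ⟨1, by omega⟩ hne01
    rw [← hN] at h2le
    have hle0 : n ⟨1, by omega⟩ ≤ n ⟨0, by omega⟩ := hsorted (by simp [Fin.le_def])
    omega
  have hsumU0 : N / 3 ≤ ∑ i : Fin r, (n i / 2) := by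
    have hptw : ∀ i : Fin r, n i ≤ (if Odd (n i) then 1 else 0) + 2 * (n i / 2) := by
      intro i
      by_cases h : Odd (n i)
      · rw [if_pos h]
        have h' : n i % 2 = 1 := Nat.odd_iff.mp h
        omega
      · rw [if_neg h]
        have h' : ¬ n i % 2 = 1 := fun hc => h (Nat.odd_iff.mpr hc)
        omega
    have hsums : N ≤ (∑ i, if Odd (n i) then 1 else 0) + 2 * ∑ i : Fin r, (n i / 2) := by
      calc N = ∑ i, n i := hN
        _ ≤ ∑ i, ((if Odd (n i) then 1 else 0) + 2 * (n i / 2)) :=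
          Finset.sum_le_sum fun i _ => hptw i
        _ = (∑ i, if Odd (n i) then 1 else 0) + 2 * ∑ i : Fin r, (n i / 2) := by
          rw [Finset.sum_add_distrib, Finset.mul_sum]
    have hαs : α = ∑ i : Fin r, if Odd (n i) then 1 else 0 := by
      rw [hα, Finset.card_filter]
    omega
  obtain ⟨t, htL, htU, htsum⟩ := sandwich (fun i : Fin r => n i - (N / 3 + N % 3))
      (fun i : Fin r => n i / 2) hLU0 (N / 3) hsumL0 hsumU0
  -- now apply upper_mem
  have hts : ∀ i, n i = 2 * t i + (n i - 2 * t i) := by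
    intro i; have := htU i; omega
  have hsumS : ∑ i : Fin r, (n i - 2 * t i) = N - 2 * (N / 3) := by
    have hcg : ∑ i : Fin r, ((n i - 2 * t i) + 2 * t i) = ∑ i, n i :=
      Finset.sum_congr rfl fun i _ => by have := htU i; omega
    rw [Finset.sum_add_distrib, ← Finset.mul_sum, htsum, ← hN] at hcg
    omega
  have hhall' : ∀ i, (n i - 2 * t i) + t i ≤ ∑ j : Fin r, (n j - 2 * t j) := by
    intro i
    have hLi := htL i
    have hUi := htU i
    rw [hsumS]
    omega
  have hKS' : ∑ i : Fin r, t i ≤ ∑ i : Fin r, (n i - 2 * t i) := by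
    rw [hsumS, htsum]; omega
  have hS2' : ∑ i : Fin r, (n i - 2 * t i) ≤ ∑ i : Fin r, t i + 2 := by
    rw [hsumS, htsum]; omega
  have hKc' : ∑ i : Fin r, t i ≤ (N + 2) / 3 := by rw [htsum]; omega
  have hc2' : ∑ i : Fin r, t i < ∑ i : Fin r, (n i - 2 * t i) →
      ∑ i : Fin r, t i < (N + 2) / 3 := by
    rw [hsumS, htsum]; omega
  obtain ⟨u, v, p, hiso, hcov⟩ := upper_mem hr n hpos t (fun i => n i - 2 * t i)
    hts hhall' hKS' hS2' ((N + 2) / 3) hKc' hc2'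
  have hmemS : (N + 2) / 3 ∈ {k | ∃ (u v : Fin k → Σ i : Fin r, Fin (n i))
        (p : ∀ i, (completeMultipartiteGraph (fun i : Fin r => Fin (n i))).Walk (u i) (v i)),
        (∀ i, (p i).IsIsometricPath) ∧ ∀ w, ∃ i, w ∈ (p i).support} := by
    exact ⟨u, v, p, hiso, hcov⟩
  rw [isometricPathNumber]
  exact le_antisymm (Nat.sInf_le hmemS) (le_csInf ⟨_, hmemS⟩ hlow)
end

section
/- If n₁, n₂ and n₃ are positive even integers, then the isometric path number of the Cartesian product K_{n₁} □ K_{n₂} □ K_{n₃} of three complete graphs equals n₁·n₂·n₃/4. -/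
open SimpleGraph

abbrev G3 (n₁ n₂ n₃ : ℕ) := SimpleGraph.boxProd (SimpleGraph.boxProd (completeGraph (Fin n₁)) (completeGraph (Fin n₂))) (completeGraph (Fin n₃))
abbrev V3 (n₁ n₂ n₃ : ℕ) := (Fin n₁ × Fin n₂) × Fin n₃

def d1 {α : Type*} [DecidableEq α] (x y : α) : ℕ := if x = y then 0 else 1

lemma d1_tri {α : Type*} [DecidableEq α] (x y z : α) : d1 x z ≤ d1 x y + d1 y z := by
  unfold d1; split_ifs <;> simp_all

def hdist {n₁ n₂ n₃ : ℕ} (u v : V3 n₁ n₂ n₃) : ℕ :=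
  d1 u.1.1 v.1.1 + d1 u.1.2 v.1.2 + d1 u.2 v.2

lemma hdist_tri {n₁ n₂ n₃ : ℕ} (u w v : V3 n₁ n₂ n₃) : hdist u v ≤ hdist u w + hdist w v := by
  unfold hdist
  have := d1_tri u.1.1 w.1.1 v.1.1
  have := d1_tri u.1.2 w.1.2 v.1.2
  have := d1_tri u.2 w.2 v.2
  omega

lemma hdist_adj {n₁ n₂ n₃ : ℕ} {u v : V3 n₁ n₂ n₃} (h : (G3 n₁ n₂ n₃).Adj u v) :
    hdist u v ≤ 1 := by
  simp only [boxProd_adj, completeGraph_eq_top, top_adj, Prod.ext_iff] at h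
  unfold hdist d1
  split_ifs <;> tauto

lemma hdist_le_length {n₁ n₂ n₃ : ℕ} {u v : V3 n₁ n₂ n₃} (p : (G3 n₁ n₂ n₃).Walk u v) :
    hdist u v ≤ p.length := by
  induction p with
  | nil => simp [hdist, d1]
  | @cons a b c h p ih =>
    have := hdist_tri a b c
    have := hdist_adj h
    simp only [Walk.length_cons]
    omega

/-- walk of length ≤ 1 in complete graph -/
lemma cg_dist_le_one {n : ℕ} (a b : Fin n) : (completeGraph (Fin n)).dist a b ≤ 1 := by
  by_cases h : a = b
  · subst h; simp [SimpleGraph.dist_self]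
  · have : (completeGraph (Fin n)).Adj a b := by simpa using h
    exact le_of_eq (SimpleGraph.dist_eq_one_iff_adj.mpr this)

lemma dist_boxProd_le {α β : Type*} (G : SimpleGraph α) (H : SimpleGraph β)
    (a₁ a₂ : α) (b₁ b₂ : β) (ha : G.Reachable a₁ a₂) (hb : H.Reachable b₁ b₂) :
    (G □ H).dist (a₁, b₁) (a₂, b₂) ≤ G.dist a₁ a₂ + H.dist b₁ b₂ := by
  obtain ⟨p, hp⟩ := ha.exists_walk_length_eq_dist  -- guess
  obtain ⟨q, hq⟩ := hb.exists_walk_length_eq_dist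
  let w := (p.boxProdLeft H b₁).append (q.boxProdRight G a₂)
  have hw : w.length = G.dist a₁ a₂ + H.dist b₁ b₂ := by
    simp only [w, Walk.length_append]
    rw [show (p.boxProdLeft H b₁).length = p.length from Walk.length_map _ _,
      show (q.boxProdRight G a₂).length = q.length from Walk.length_map _ _, hp, hq]
  exact hw ▸ SimpleGraph.dist_le w

lemma cg_reachable {n : ℕ} (a b : Fin n) : (completeGraph (Fin n)).Reachable a b := by
  by_cases h : a = b
  · exact h ▸ Reachable.refl a
  · exact ⟨Walk.cons (by simpa using h) Walk.nil⟩

lemma reach_boxProd {α β : Type*} {G : SimpleGraph α} {H : SimpleGraph β}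
    {a₁ a₂ : α} {b₁ b₂ : β} (ha : G.Reachable a₁ a₂) (hb : H.Reachable b₁ b₂) :
    (G □ H).Reachable (a₁, b₁) (a₂, b₂) := by
  obtain ⟨p⟩ := ha; obtain ⟨q⟩ := hb
  exact ⟨(p.boxProdLeft H b₁).append (q.boxProdRight G a₂)⟩

lemma g3_reachable {n₁ n₂ n₃ : ℕ} (u v : V3 n₁ n₂ n₃) : (G3 n₁ n₂ n₃).Reachable u v := by
  obtain ⟨⟨a₁, b₁⟩, c₁⟩ := u; obtain ⟨⟨a₂, b₂⟩, c₂⟩ := v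
  exact reach_boxProd (reach_boxProd (cg_reachable _ _) (cg_reachable _ _)) (cg_reachable _ _)

lemma g3_dist_le_three {n₁ n₂ n₃ : ℕ} (u v : V3 n₁ n₂ n₃) : (G3 n₁ n₂ n₃).dist u v ≤ 3 := by
  unfold G3
  obtain ⟨⟨a₁, b₁⟩, c₁⟩ := u; obtain ⟨⟨a₂, b₂⟩, c₂⟩ := v
  have h1 := dist_boxProd_le (completeGraph (Fin n₁) □ completeGraph (Fin n₂))
    (completeGraph (Fin n₃)) (a₁, b₁) (a₂, b₂) c₁ c₂
    (reach_boxProd (cg_reachable _ _) (cg_reachable _ _)) (cg_reachable _ _)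
  have h2 := dist_boxProd_le (completeGraph (Fin n₁)) (completeGraph (Fin n₂))
    a₁ a₂ b₁ b₂ (cg_reachable _ _) (cg_reachable _ _)
  have := cg_dist_le_one a₁ a₂
  have := cg_dist_le_one b₁ b₂
  have := cg_dist_le_one c₁ c₂
  omega

lemma g3_dist_eq_three {n₁ n₂ n₃ : ℕ} {u v : V3 n₁ n₂ n₃}
    (h1 : u.1.1 ≠ v.1.1) (h2 : u.1.2 ≠ v.1.2) (h3 : u.2 ≠ v.2) :
    (G3 n₁ n₂ n₃).dist u v = 3 := by
  obtain ⟨p, hp⟩ := (g3_reachable u v).exists_walk_length_eq_dist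
  have hd : hdist u v = 3 := by unfold hdist d1; simp [h1, h2, h3]
  have := hdist_le_length p
  have := g3_dist_le_three u v
  omega

def e0 {m : ℕ} (i : Fin m) : Fin (m+m) := ⟨2*i.1, by omega⟩
def e1 {m : ℕ} (i : Fin m) : Fin (m+m) := ⟨2*i.1+1, by omega⟩

lemma e0_ne_e1 {m : ℕ} (i : Fin m) : e0 i ≠ e1 i := by
  simp [e0, e1, Fin.ext_iff]

lemma adjA {n₁ n₂ n₃ : ℕ} {a a' : Fin n₁} (b : Fin n₂) (c : Fin n₃) (h : a ≠ a') :
    (G3 n₁ n₂ n₃).Adj ((a, b), c) ((a', b), c) := by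
  simp [boxProd_adj, h]

lemma adjB {n₁ n₂ n₃ : ℕ} (a : Fin n₁) {b b' : Fin n₂} (c : Fin n₃) (h : b ≠ b') :
    (G3 n₁ n₂ n₃).Adj ((a, b), c) ((a, b'), c) := by
  simp [boxProd_adj, h]

lemma adjC {n₁ n₂ n₃ : ℕ} (a : Fin n₁) (b : Fin n₂) {c c' : Fin n₃} (h : c ≠ c') :
    (G3 n₁ n₂ n₃).Adj ((a, b), c) ((a, b), c') := by
  simp [boxProd_adj, h]

variable {m₁ m₂ m₃ : ℕ}

abbrev I3 (m₁ m₂ m₃ : ℕ) := (Fin m₁ × Fin m₂ × Fin m₃) ⊕ (Fin m₁ × Fin m₂ × Fin m₃)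

def startV : I3 m₁ m₂ m₃ → V3 (m₁+m₁) (m₂+m₂) (m₃+m₃)
  | Sum.inl (i, j, k) => ((e0 i, e0 j), e0 k)
  | Sum.inr (i, j, k) => ((e0 i, e1 j), e0 k)

def endV : I3 m₁ m₂ m₃ → V3 (m₁+m₁) (m₂+m₂) (m₃+m₃)
  | Sum.inl (i, j, k) => ((e1 i, e1 j), e1 k)
  | Sum.inr (i, j, k) => ((e1 i, e0 j), e1 k)

def pwalk : (x : I3 m₁ m₂ m₃) → (G3 (m₁+m₁) (m₂+m₂) (m₃+m₃)).Walk (startV x) (endV x)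
  | Sum.inl (i, j, k) =>
      Walk.cons (adjA (e0 j) (e0 k) (e0_ne_e1 i))
        (Walk.cons (adjB (e1 i) (e0 k) (e0_ne_e1 j))
          (Walk.cons (adjC (e1 i) (e1 j) (e0_ne_e1 k)) Walk.nil))
  | Sum.inr (i, j, k) =>
      Walk.cons (adjC (e0 i) (e1 j) (e0_ne_e1 k))
        (Walk.cons (adjB (e0 i) (e1 k) (e0_ne_e1 j).symm)
          (Walk.cons (adjA (e0 j) (e1 k) (e0_ne_e1 i)) Walk.nil))

lemma pwalk_length (x : I3 m₁ m₂ m₃) : (pwalk x).length = 3 := by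
  obtain (⟨i,j,k⟩|⟨i,j,k⟩) := x <;> rfl

lemma pwalk_isometric (x : I3 m₁ m₂ m₃) : (pwalk x).IsIsometricPath := by
  obtain (⟨i,j,k⟩|⟨i,j,k⟩) := x <;>
  · constructor
    · simp [pwalk, Walk.isPath_def, Walk.support_cons, startV, endV, Prod.ext_iff,
        e0_ne_e1, (e0_ne_e1 _).symm]
    · rw [pwalk_length]
      exact (g3_dist_eq_three (e0_ne_e1 _) (by first | exact e0_ne_e1 _ | exact (e0_ne_e1 _).symm)
        (e0_ne_e1 _)).symm

lemma pwalk_cover (w : V3 (m₁+m₁) (m₂+m₂) (m₃+m₃)) :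
    ∃ x : I3 m₁ m₂ m₃, w ∈ (pwalk x).support := by
  obtain ⟨⟨a, b⟩, c⟩ := w
  have ha2 : a.1 < m₁+m₁ := a.2
  have hb2 : b.1 < m₂+m₂ := b.2
  have hc2 : c.1 < m₃+m₃ := c.2
  set i : Fin m₁ := ⟨a.1/2, by omega⟩
  set j : Fin m₂ := ⟨b.1/2, by omega⟩
  set k : Fin m₃ := ⟨c.1/2, by omega⟩
  have key : ∀ x : I3 m₁ m₂ m₃,
      (((a,b),c) = startV x ∨ ((a,b),c) ∈ (pwalk x).support.tail) → ((a,b),c) ∈ (pwalk x).support := by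
    intro x h
    rcases h with h | h
    · rw [h]; exact Walk.start_mem_support _
    · exact List.mem_of_mem_tail h
  rcases Nat.mod_two_eq_zero_or_one a.1 with hpa | hpa <;>
    rcases Nat.mod_two_eq_zero_or_one b.1 with hpb | hpb <;>
    rcases Nat.mod_two_eq_zero_or_one c.1 with hpc | hpc
  · exact ⟨Sum.inl (i,j,k), key _ (Or.inl (by
      simp [startV, Prod.ext_iff, Fin.ext_iff, e0, e1, i, j, k]; omega))⟩
  · exact ⟨Sum.inr (i,j,k), key _ (Or.inr (by
      dsimp only [pwalk, startV, endV, Walk.support_cons, Walk.support_nil, List.tail_cons]; simp [Prod.ext_iff, Fin.ext_iff, e0, e1, i, j, k]; omega))⟩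
  · exact ⟨Sum.inr (i,j,k), key _ (Or.inl (by
      simp [startV, Prod.ext_iff, Fin.ext_iff, e0, e1, i, j, k]; omega))⟩
  · exact ⟨Sum.inr (i,j,k), key _ (Or.inr (by
      dsimp only [pwalk, startV, endV, Walk.support_cons, Walk.support_nil, List.tail_cons]; simp [Prod.ext_iff, Fin.ext_iff, e0, e1, i, j, k]; omega))⟩
  · exact ⟨Sum.inl (i,j,k), key _ (Or.inr (by
      dsimp only [pwalk, startV, endV, Walk.support_cons, Walk.support_nil, List.tail_cons]; simp [Prod.ext_iff, Fin.ext_iff, e0, e1, i, j, k]; omega))⟩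
  · exact ⟨Sum.inr (i,j,k), key _ (Or.inr (by
      dsimp only [pwalk, startV, endV, Walk.support_cons, Walk.support_nil, List.tail_cons]; simp [Prod.ext_iff, Fin.ext_iff, e0, e1, i, j, k]; omega))⟩
  · exact ⟨Sum.inl (i,j,k), key _ (Or.inr (by
      dsimp only [pwalk, startV, endV, Walk.support_cons, Walk.support_nil, List.tail_cons]; simp [Prod.ext_iff, Fin.ext_iff, e0, e1, i, j, k]; omega))⟩
  · exact ⟨Sum.inl (i,j,k), key _ (Or.inr (by
      dsimp only [pwalk, startV, endV, Walk.support_cons, Walk.support_nil, List.tail_cons]; simp [Prod.ext_iff, Fin.ext_iff, e0, e1, i, j, k]; omega))⟩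

theorem aux (m₁ m₂ m₃ : ℕ) :
    isometricPathNumber (G3 (m₁+m₁) (m₂+m₂) (m₃+m₃)) = 2*(m₁*m₂*m₃) := by
  have hcard : Fintype.card (I3 m₁ m₂ m₃) = 2*(m₁*m₂*m₃) := by
    simp [I3]; ring
  have e : I3 m₁ m₂ m₃ ≃ Fin (2*(m₁*m₂*m₃)) := Fintype.equivFinOfCardEq hcard
  have hmem : 2*(m₁*m₂*m₃) ∈ {k | ∃ (u v : Fin k → V3 (m₁+m₁) (m₂+m₂) (m₃+m₃))
      (p : ∀ i, (G3 (m₁+m₁) (m₂+m₂) (m₃+m₃)).Walk (u i) (v i)),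
      (∀ i, (p i).IsIsometricPath) ∧ ∀ w, ∃ i, w ∈ (p i).support} := by
    refine ⟨fun t => startV (e.symm t), fun t => endV (e.symm t), fun t => pwalk (e.symm t),
      fun t => pwalk_isometric _, fun w => ?_⟩
    obtain ⟨x, hx⟩ := pwalk_cover (m₁ := m₁) (m₂ := m₂) (m₃ := m₃) w
    exact ⟨e x, by show w ∈ (pwalk (e.symm (e x))).support; rw [Equiv.symm_apply_apply]; exact hx⟩
  apply le_antisymm
  · exact Nat.sInf_le hmem
  · refine le_csInf ⟨_, hmem⟩ ?_
    rintro k ⟨u, v, p, hiso, hcov⟩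
    have hsub : (Finset.univ : Finset (V3 (m₁+m₁) (m₂+m₂) (m₃+m₃))) ⊆
        Finset.univ.biUnion (fun t => (p t).support.toFinset) := by
      intro w _
      obtain ⟨t, ht⟩ := hcov w
      exact Finset.mem_biUnion.mpr ⟨t, Finset.mem_univ t, List.mem_toFinset.mpr ht⟩
    have hcard4 : ∀ t, (p t).support.toFinset.card ≤ 4 := by
      intro t
      have h1 : (p t).support.toFinset.card ≤ (p t).support.length := List.toFinset_card_le _
      have h2 : (p t).support.length = (p t).length + 1 := Walk.length_support _
      have h3 := (hiso t).2
      have h4 := g3_dist_le_three (u t) (v t)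
      omega
    have hV : Fintype.card (V3 (m₁+m₁) (m₂+m₂) (m₃+m₃)) = (m₁+m₁) * (m₂+m₂) * (m₃+m₃) := by
      simp [V3]
    have := Finset.card_le_card hsub
    have hb := Finset.card_biUnion_le (s := (Finset.univ : Finset (Fin k)))
      (t := fun t => (p t).support.toFinset)
    have hsum : ∑ t : Fin k, (p t).support.toFinset.card ≤ k * 4 := by
      calc ∑ t : Fin k, (p t).support.toFinset.card ≤ ∑ _t : Fin k, 4 :=
            Finset.sum_le_sum (fun t _ => hcard4 t)
        _ = k * 4 := by simp [Finset.sum_const, Finset.card_univ, mul_comm]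
    have hVle : (m₁+m₁) * (m₂+m₂) * (m₃+m₃) ≤ k * 4 := by
      rw [← hV]
      calc Fintype.card (V3 (m₁+m₁) (m₂+m₂) (m₃+m₃)) = Finset.univ.card := (Finset.card_univ).symm
        _ ≤ _ := this
        _ ≤ _ := hb
        _ ≤ k * 4 := hsum
    nlinarith

theorem stmt_6 (n₁ n₂ n₃ : ℕ) (h1 : 0 < n₁) (h2 : 0 < n₂) (h3 : 0 < n₃)
    (e1 : Even n₁) (e2 : Even n₂) (e3 : Even n₃) :
    isometricPathNumber
        (SimpleGraph.boxProd (SimpleGraph.boxProd (completeGraph (Fin n₁)) (completeGraph (Fin n₂)))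
          (completeGraph (Fin n₃))) =
      n₁ * n₂ * n₃ / 4 := by
  obtain ⟨a, rfl⟩ := e1
  obtain ⟨b, rfl⟩ := e2
  obtain ⟨c, rfl⟩ := e3
  have := aux a b c
  rw [show (a+a) * (b+b) * (c+c) = 4 * (2*(a*b*c)) by ring, Nat.mul_div_cancel_left _ (by norm_num)]
  exact this
end

section
/- Let r ≥ 2 and let n₁ ≥ n₂ ≥ … ≥ n_r ≥ 1 with n = n₁ + n₂ + … + n_r, and let α be the number of indices i with n_i odd. Then the isometric path number of the complete r-partite graph K_{n₁,n₂,…,n_r} is at least ⌈(n+α)/4⌉. -/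
open SimpleGraph

open Finset in
lemma dist2 {r : ℕ} (hr : 2 ≤ r) {n : Fin r → ℕ} (hpos : ∀ i, 1 ≤ n i)
    (a b : Σ i, Fin (n i)) :
    (completeMultipartiteGraph (fun i : Fin r => Fin (n i))).dist a b ≤ 2 := by
  set G := completeMultipartiteGraph (fun i : Fin r => Fin (n i)) with hG
  by_cases hab : a.1 = b.1
  · obtain ⟨j, hj⟩ : ∃ j : Fin r, j ≠ a.1 := by
      rcases Decidable.eq_or_ne a.1 ⟨0, by omega⟩ with h | h
      · exact ⟨⟨1, by omega⟩, by rw [h]; intro hh; exact absurd (congrArg Fin.val hh) (by simp)⟩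
      · exact ⟨⟨0, by omega⟩, Ne.symm h⟩
    set w : Σ i, Fin (n i) := ⟨j, ⟨0, hpos j⟩⟩ with hw
    have h1 : G.Adj a w := by simp [hG, hw, Ne.symm hj]
    have h2 : G.Adj w b := by simp [hG, hw]; rw [← hab]; exact hj
    have := SimpleGraph.dist_le (Walk.cons h1 (Walk.cons h2 Walk.nil))
    exact le_trans this (by norm_num)
  · have h1 : G.Adj a b := by simpa [hG] using hab
    have := SimpleGraph.dist_le (Walk.cons h1 Walk.nil)
    exact le_trans (by simpa using this) one_le_two

open Finset in
lemma struct {r : ℕ} (hr : 2 ≤ r) {n : Fin r → ℕ} (hpos : ∀ i, 1 ≤ n i)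
    {a b : Σ i, Fin (n i)}
    (p : (completeMultipartiteGraph (fun i : Fin r => Fin (n i))).Walk a b)
    (hp : p.IsIsometricPath) :
    (∃ t : Finset (Fin r), (∀ x ∈ p.support, x.1 ∈ t) ∧ t.card ≤ 2) ∧
    (∀ j, ∃ s : Finset (Σ i, Fin (n i)),
      (∀ x ∈ p.support, x.1 = j → x ∈ s) ∧ s.card ≤ 2) := by
  revert hp
  cases p with
  | nil =>
    intro hp
    exact ⟨⟨{a.1}, by simp, by simp⟩, fun j => ⟨{a}, by simp, by simp⟩⟩
  | cons h q =>
    rename_i w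
    cases q with
    | nil =>
      intro hp
      refine ⟨⟨{a.1, b.1}, ?_, Finset.card_insert_le _ _ |>.trans (by simp)⟩,
        fun j => ⟨{a, b}, ?_, Finset.card_insert_le _ _ |>.trans (by simp)⟩⟩ <;>
        · intro x hx
          simp at hx
          rcases hx with h | h <;> simp [h]
    | cons h' q' =>
      rename_i w2
      cases q' with
      | nil =>
        intro hp
        have hd : (completeMultipartiteGraph (fun i : Fin r => Fin (n i))).dist a b = 2 := by
          have := hp.2; simpa using this.symm
        have hnadj : ¬ (completeMultipartiteGraph (fun i : Fin r => Fin (n i))).Adj a b := by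
          intro hadj
          have h1 := SimpleGraph.dist_le (Walk.cons hadj Walk.nil)
          simp at h1; omega
        have hab : a.1 = b.1 := by
          by_contra hne; exact hnadj hne
        have haw : a.1 ≠ w.1 := h
        constructor
        · refine ⟨{a.1, w.1}, ?_, Finset.card_insert_le _ _ |>.trans (by simp)⟩
          intro x hx
          simp at hx
          rcases hx with h | h | h <;> simp [h, ← hab]
        · intro j
          by_cases hj : a.1 = j
          · refine ⟨{a, b}, ?_, Finset.card_insert_le _ _ |>.trans (by simp)⟩
            intro x hx hxj
            simp at hx
            rcases hx with rfl | rfl | rfl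
            · simp
            · exact absurd (hj.trans hxj.symm) haw
            · simp
          · refine ⟨{w}, ?_, by simp⟩
            intro x hx hxj
            simp at hx
            rcases hx with rfl | rfl | rfl
            · exact absurd hxj hj
            · simp
            · exact absurd (hab.trans hxj) hj
      | cons h'' q'' =>
        intro hp
        exfalso
        have hl : (Walk.cons h (Walk.cons h' (Walk.cons h'' q''))).length ≤ 2 :=
          le_of_eq_of_le hp.2 (dist2 hr hpos a b)
        simp [Walk.length_cons] at hl

open Finset in
lemma key {r : ℕ} (hr : 2 ≤ r) {n : Fin r → ℕ} (hpos : ∀ i, 1 ≤ n i) {k : ℕ}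
    (u v : Fin k → Σ i, Fin (n i))
    (p : ∀ i, (completeMultipartiteGraph (fun i : Fin r => Fin (n i))).Walk (u i) (v i))
    (hiso : ∀ i, (p i).IsIsometricPath)
    (hcov : ∀ w : Σ i, Fin (n i), ∃ i, w ∈ (p i).support) :
    (∑ j, n j) + (Finset.univ.filter fun j => Odd (n j)).card ≤ 4 * k := by
  classical
  set V := Σ i : Fin r, Fin (n i)
  let g : V → Fin k := fun x => (hcov x).choose
  have hg : ∀ x, x ∈ (p (g x)).support := fun x => (hcov x).choose_spec
  let S : Fin k → Finset (Fin r) := fun i => ((p i).support.map Sigma.fst).toFinset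
  have hmemS : ∀ i (x : V), x ∈ (p i).support → x.1 ∈ S i := by
    intro i x hx
    simp only [S, List.mem_toFinset, List.mem_map]
    exact ⟨x, hx, rfl⟩
  have hS2 : ∀ i, (S i).card ≤ 2 := by
    intro i
    obtain ⟨t, ht, ht2⟩ := (struct hr hpos (p i) (hiso i)).1
    refine le_trans (Finset.card_le_card ?_) ht2
    intro j hj
    simp only [S, List.mem_toFinset, List.mem_map] at hj
    obtain ⟨x, hx, rfl⟩ := hj
    exact ht x hx
  let M : Fin r → Finset (Fin k) := fun j => Finset.univ.filter fun i => j ∈ S i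
  let T : Fin r → Finset V := fun j => Finset.univ.filter fun x => x.1 = j
  have hT : ∀ j, (T j).card = n j := by
    intro j
    have : T j = Finset.univ.image (fun a : Fin (n j) => (⟨j, a⟩ : V)) := by
      ext ⟨i, x⟩
      simp only [T, Finset.mem_filter, Finset.mem_univ, true_and, Finset.mem_image]
      constructor
      · rintro rfl; exact ⟨x, rfl⟩
      · rintro ⟨a, ha⟩; exact (congrArg Sigma.fst ha).symm
    rw [this, Finset.card_image_of_injective _ (sigma_mk_injective)]
    simp
  have hnm : ∀ j, n j ≤ 2 * (M j).card := by
    intro j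
    rw [← hT j]
    rw [Finset.card_eq_sum_card_image g (T j)]
    have himg : (T j).image g ⊆ M j := by
      intro i hi
      obtain ⟨x, hx, rfl⟩ := Finset.mem_image.mp hi
      simp only [T, Finset.mem_filter, Finset.mem_univ, true_and] at hx
      simp only [M, Finset.mem_filter, Finset.mem_univ, true_and]
      exact hx ▸ hmemS (g x) x (hg x)
    calc ∑ i ∈ (T j).image g, ((T j).filter fun x => g x = i).card
        ≤ ∑ i ∈ (T j).image g, 2 := by
          refine Finset.sum_le_sum fun i _ => ?_
          obtain ⟨s, hs, hs2⟩ := (struct hr hpos (p i) (hiso i)).2 j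
          refine le_trans (Finset.card_le_card ?_) hs2
          intro x hx
          simp only [T, Finset.mem_filter, Finset.mem_univ, true_and] at hx
          exact hs x (hx.2 ▸ hg x) hx.1
      _ = 2 * ((T j).image g).card := by rw [Finset.sum_const, smul_eq_mul, mul_comm]
      _ ≤ 2 * (M j).card := by
          exact Nat.mul_le_mul_left 2 (Finset.card_le_card himg)
  have hsum : ∑ j, (M j).card = ∑ i, (S i).card := by
    simp only [M, Finset.card_filter]
    rw [Finset.sum_comm]
    congr 1
    ext i
    rw [← Finset.card_filter]
    congr 1
    ext j
    simp
  have h1 : (∑ j, n j) + (Finset.univ.filter fun j => Odd (n j)).card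
      ≤ ∑ j, 2 * (M j).card := by
    rw [Finset.card_filter, ← Finset.sum_add_distrib]
    refine Finset.sum_le_sum fun j _ => ?_
    by_cases hodd : Odd (n j)
    · have h2 := hnm j
      have : n j % 2 = 1 := Nat.odd_iff.mp hodd
      simp only [hodd, if_true]
      omega
    · simpa [hodd] using hnm j
  have h2 : ∑ i, (S i).card ≤ 2 * k := by
    calc ∑ i, (S i).card ≤ ∑ i : Fin k, 2 := Finset.sum_le_sum fun i _ => hS2 i
      _ = 2 * k := by simp [mul_comm]
  calc (∑ j, n j) + (Finset.univ.filter fun j => Odd (n j)).card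
      ≤ ∑ j, 2 * (M j).card := h1
    _ = 2 * ∑ j, (M j).card := by rw [Finset.mul_sum]
    _ = 2 * ∑ i, (S i).card := by rw [hsum]
    _ ≤ 2 * (2 * k) := Nat.mul_le_mul_left 2 h2
    _ = 4 * k := by ring

theorem stmt_12 (r : ℕ) (hr : 2 ≤ r) (n : Fin r → ℕ) (hpos : ∀ i, 1 ≤ n i)
    (hsorted : Antitone n) (N : ℕ) (hN : N = ∑ i, n i)
    (α : ℕ) (hα : α = (Finset.univ.filter fun i => Odd (n i)).card) :
    (N + α + 3) / 4 ≤
      isometricPathNumber (completeMultipartiteGraph (fun i : Fin r => Fin (n i))) := by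
  classical
  set G := completeMultipartiteGraph (fun i : Fin r => Fin (n i)) with hG
  set Set' := {k | ∃ (u v : Fin k → Σ i : Fin r, Fin (n i)) (p : ∀ i, G.Walk (u i) (v i)),
    (∀ i, (p i).IsIsometricPath) ∧ ∀ w : Σ i : Fin r, Fin (n i), ∃ i, w ∈ (p i).support} with hSet
  have hne : Set'.Nonempty := by
    refine ⟨Fintype.card (Σ i : Fin r, Fin (n i)), ?_⟩
    let e := (Fintype.equivFin (Σ i : Fin r, Fin (n i))).symm
    refine ⟨e, e, fun i => Walk.nil, fun i => ⟨Walk.IsPath.nil, by simp [SimpleGraph.dist_self]⟩, fun w => ⟨e.symm w, by simp⟩⟩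
  have hmem : sInf Set' ∈ Set' := Nat.sInf_mem hne
  obtain ⟨u, v, p, hiso, hcov⟩ := hmem
  have hb := key hr hpos u v p hiso hcov
  have : isometricPathNumber G = sInf Set' := rfl
  rw [this]
  subst hN hα
  omega
end

section
/- Let r ≥ 1 and let n₁,…,n_r ≥ 2 be integers with n = n₁·n₂·…·n_r. The isometric path number of the Cartesian product K_{n₁} □ K_{n₂} □ … □ K_{n_r} of complete graphs is at least ⌈n/(r+1)⌉. -/
open SimpleGraph

/-- The Hamming graph `K_{n₁} □ K_{n₂} □ … □ K_{n_r}`: vertices are the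
`r`-tuples `(x₁, …, x_r)` with `0 ≤ xᵢ < nᵢ`, two tuples being adjacent iff
they differ in exactly one coordinate. -/
def hammingGraph {r : ℕ} (n : Fin r → ℕ) : SimpleGraph (∀ i, Fin (n i)) where
  Adj x y := ∃! i, x i ≠ y i
  symm := by
    constructor
    rintro x y ⟨i, hi, hu⟩
    exact ⟨i, hi.symm, fun j hj => hu j hj.symm⟩
  loopless := by
    constructor
    rintro x ⟨i, hi, -⟩
    exact hi rfl

/-- Between any two vertices of the Hamming graph there is a walk whose length
is at most the number of coordinates in which they differ. -/
lemma hamming_walk_le {r : ℕ} (n : Fin r → ℕ) (d : ℕ) :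
    ∀ x y : ∀ i, Fin (n i),
      (Finset.univ.filter (fun i => x i ≠ y i)).card ≤ d →
      ∃ w : (hammingGraph n).Walk x y, w.length ≤ d := by
  induction d with
  | zero =>
    intro x y h
    have hxy : x = y := by
      funext i
      by_contra hi
      have : i ∈ Finset.univ.filter (fun i => x i ≠ y i) := by
        simp [hi]
      have := Finset.card_pos.mpr ⟨i, this⟩
      omega
    subst hxy
    exact ⟨SimpleGraph.Walk.nil, by simp⟩
  | succ d ih =>
    intro x y h
    by_cases hxy : x = y
    · subst hxy; exact ⟨SimpleGraph.Walk.nil, by simp⟩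
    · have : ∃ i, x i ≠ y i := by
        by_contra hc
        push_neg at hc
        exact hxy (funext fun i => hc i)
      obtain ⟨i, hi⟩ := this
      set x' : ∀ j, Fin (n j) := Function.update x i (y i) with hx'
      have hadj : (hammingGraph n).Adj x x' := by
        refine ⟨i, ?_, ?_⟩
        · simp [hx', Function.update_self]
          exact hi
        · intro j hj
          by_contra hji
          apply hj
          simp [hx', Function.update_of_ne hji]
      have hsub : Finset.univ.filter (fun j => x' j ≠ y j) ⊆
          (Finset.univ.filter (fun j => x j ≠ y j)).erase i := by
        intro j hj
        simp only [Finset.mem_filter, Finset.mem_univ, true_and] at hj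
        rcases eq_or_ne j i with rfl | hji
        · exfalso; apply hj; simp [hx', Function.update_self]
        · refine Finset.mem_erase.mpr ⟨hji, ?_⟩
          simp only [Finset.mem_filter, Finset.mem_univ, true_and]
          simpa [hx', Function.update_of_ne hji] using hj
      have hcard : (Finset.univ.filter (fun j => x' j ≠ y j)).card ≤ d := by
        have h1 := Finset.card_le_card hsub
        have h2 : i ∈ Finset.univ.filter (fun j => x j ≠ y j) := by simp [hi]
        have h3 := Finset.card_erase_of_mem h2
        omega
      obtain ⟨w, hw⟩ := ih x' y hcard
      exact ⟨SimpleGraph.Walk.cons hadj w, by simpa using Nat.succ_le_succ hw⟩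

lemma hamming_dist_le {r : ℕ} (n : Fin r → ℕ) (x y : ∀ i, Fin (n i)) :
    (hammingGraph n).dist x y ≤ r := by
  have hcard : (Finset.univ.filter (fun i => x i ≠ y i)).card ≤ r := by
    calc (Finset.univ.filter (fun i => x i ≠ y i)).card
        ≤ (Finset.univ : Finset (Fin r)).card := Finset.card_filter_le _ _
      _ = r := by simp
  obtain ⟨w, hw⟩ := hamming_walk_le n r x y (hcard.trans (le_refl r))
  exact le_trans (SimpleGraph.dist_le w) hw

theorem stmt_14 (r : ℕ) (hr : 1 ≤ r) (n : Fin r → ℕ) (hn : ∀ i, 2 ≤ n i)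
    (N : ℕ) (hN : N = ∏ i, n i) :
    (N + r) / (r + 1) ≤ isometricPathNumber (hammingGraph n) := by
  classical
  set V := ∀ i, Fin (n i)
  set G := hammingGraph n
  set S : Set ℕ := {k | ∃ (u v : Fin k → V) (p : ∀ i, G.Walk (u i) (v i)),
    (∀ i, (p i).IsIsometricPath) ∧ ∀ w : V, ∃ i, w ∈ (p i).support}
  have hNcard : N = Fintype.card V := by
    simp [hN, V, Fintype.card_pi]
  -- S is nonempty: cover by trivial paths
  have hSne : S.Nonempty := by
    refine ⟨Fintype.card V, ?_⟩
    let e := (Fintype.equivFin V).symm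
    refine ⟨e, e, fun i => SimpleGraph.Walk.nil, fun i => ⟨SimpleGraph.Walk.IsPath.nil, (SimpleGraph.dist_self.symm)⟩,
      fun w => ⟨e.symm w, by simp⟩⟩
  set k := sInf S with hk
  have hmem : k ∈ S := Nat.sInf_mem hSne
  obtain ⟨u, v, p, hiso, hcov⟩ := hmem
  -- counting
  have hcount : N ≤ k * (r + 1) := by
    have hsubset : (Finset.univ : Finset V) ⊆
        Finset.univ.biUnion (fun i : Fin k => (p i).support.toFinset) := by
      intro w _
      obtain ⟨i, hi⟩ := hcov w
      exact Finset.mem_biUnion.mpr ⟨i, Finset.mem_univ i, List.mem_toFinset.mpr hi⟩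
    have h1 : Fintype.card V ≤
        ∑ i : Fin k, ((p i).support.toFinset).card :=
      le_trans (Finset.card_le_card hsubset) (Finset.card_biUnion_le)
    have h2 : ∀ i : Fin k, ((p i).support.toFinset).card ≤ r + 1 := by
      intro i
      calc ((p i).support.toFinset).card ≤ (p i).support.length :=
            List.toFinset_card_le _
        _ = (p i).length + 1 := SimpleGraph.Walk.length_support _
        _ ≤ r + 1 := by
            have h := (hiso i).2
            have hd : G.dist (u i) (v i) ≤ r := hamming_dist_le n (u i) (v i)
            omega
    calc N = Fintype.card V := hNcard
      _ ≤ ∑ i : Fin k, ((p i).support.toFinset).card := h1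
      _ ≤ ∑ _i : Fin k, (r + 1) := Finset.sum_le_sum (fun i _ => h2 i)
      _ = k * (r + 1) := by simp [Finset.sum_const, mul_comm]
  have hcount' : N ≤ (r + 1) * k := by rw [mul_comm]; exact hcount
  have : (N + r) / (r + 1) ≤ k := by
    rw [Nat.div_le_iff_le_mul_add_pred (by omega)]
    omega
  exact this
end

section
/- If n₃ ≥ 3 is an odd integer, then the Cartesian product K₂ □ K₂ □ K_{n₃} cannot be covered by n₃ isometric paths; that is, its isometric path number is at least n₃ + 1. -/
open SimpleGraph Finset

private def Phi (A : Finset (Fin 2 × Fin 2)) : ZMod 2 :=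
  (A.card : ZMod 2) * (∑ v ∈ A, ((v.1 : ℕ) : ZMod 2)) + ∑ v ∈ A, ((v.2 : ℕ) : ZMod 2)

private lemma phi_compl : ∀ A : Finset (Fin 2 × Fin 2), Phi A + Phi Aᶜ = 0 := by decide

private lemma phi_empty : Phi ∅ = 0 := by decide

private lemma phi_move1 : ∀ s0 s2 s3 : Fin 2 × Fin 2,
    (s0.1 ≠ s2.1 ∧ s0.2 = s2.2 ∨ s0.1 = s2.1 ∧ s0.2 ≠ s2.2) →
    (s2.1 ≠ s3.1 ∧ s2.2 = s3.2 ∨ s2.1 = s3.1 ∧ s2.2 ≠ s3.2) →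
    s0.1 ≠ s3.1 → s0.2 ≠ s3.2 →
    Phi {s0} + Phi {s0, s2, s3} = 1 := by decide

private lemma phi_move2 : ∀ s0 s1 s3 : Fin 2 × Fin 2,
    (s0.1 ≠ s1.1 ∧ s0.2 = s1.2 ∨ s0.1 = s1.1 ∧ s0.2 ≠ s1.2) →
    (s1.1 ≠ s3.1 ∧ s1.2 = s3.2 ∨ s1.1 = s3.1 ∧ s1.2 ≠ s3.2) →
    s0.1 ≠ s3.1 → s0.2 ≠ s3.2 →
    Phi {s0, s1} + Phi {s1, s3} = 1 := by decide

private lemma phi_move3 : ∀ s0 s1 s2 : Fin 2 × Fin 2,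
    (s0.1 ≠ s1.1 ∧ s0.2 = s1.2 ∨ s0.1 = s1.1 ∧ s0.2 ≠ s1.2) →
    (s1.1 ≠ s2.1 ∧ s1.2 = s2.2 ∨ s1.1 = s2.1 ∧ s1.2 ≠ s2.2) →
    s0.1 ≠ s2.1 → s0.2 ≠ s2.2 →
    Phi {s0, s1, s2} + Phi {s2} = 1 := by decide

private lemma card3' : ∀ u v w : Fin 2 × Fin 2, ({u,v,w} : Finset (Fin 2 × Fin 2)).card ≤ 3 := by
  decide
private lemma card2' : ∀ u v : Fin 2 × Fin 2, ({u,v} : Finset (Fin 2 × Fin 2)).card ≤ 3 := by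
  decide

private def Aset {n : ℕ} (S : Finset ((Fin 2 × Fin 2) × Fin n)) (m : Fin n) :
    Finset (Fin 2 × Fin 2) := (S.filter (fun z => z.2 = m)).image Prod.fst

private lemma mem_aset {n : ℕ} {S : Finset ((Fin 2 × Fin 2) × Fin n)} {m : Fin n}
    {s : Fin 2 × Fin 2} : s ∈ Aset S m ↔ (s, m) ∈ S := by
  simp only [Aset, Finset.mem_image, Finset.mem_filter]
  constructor
  · rintro ⟨⟨s', m'⟩, ⟨hS, rfl⟩, rfl⟩; exact hS
  · intro h; exact ⟨(s, m), ⟨h, rfl⟩, rfl⟩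

private lemma aset_eq {n : ℕ} {S : Finset ((Fin 2 × Fin 2) × Fin n)}
    {B B' : Finset (Fin 2 × Fin 2)} {ℓ ℓ' : Fin n} (hne : ℓ ≠ ℓ')
    (h : S = B.image (fun s => (s, ℓ)) ∪ B'.image (fun s => (s, ℓ'))) (m : Fin n) :
    Aset S m = if m = ℓ then B else if m = ℓ' then B' else ∅ := by
  ext s
  rw [mem_aset, h]
  simp only [Finset.mem_union, Finset.mem_image, Prod.mk.injEq]
  split_ifs with h1 h2 <;> simp_all <;> aesop

private abbrev HG (n : ℕ) : SimpleGraph ((Fin 2 × Fin 2) × Fin n) :=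
  SimpleGraph.boxProd (SimpleGraph.boxProd (completeGraph (Fin 2)) (completeGraph (Fin 2))) (completeGraph (Fin n))

private lemma hg_adj {n : ℕ} {x y : (Fin 2 × Fin 2) × Fin n} :
    (HG n).Adj x y ↔ (x.1.1 ≠ y.1.1 ∧ x.1.2 = y.1.2 ∧ x.2 = y.2)
      ∨ (x.1.1 = y.1.1 ∧ x.1.2 ≠ y.1.2 ∧ x.2 = y.2)
      ∨ (x.1.1 = y.1.1 ∧ x.1.2 = y.1.2 ∧ x.2 ≠ y.2) := by
  simp only [HG, boxProd_adj, completeGraph_eq_top, top_adj, Prod.ext_iff]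
  tauto

private lemma step {n : ℕ} (x z : (Fin 2 × Fin 2) × Fin n) (h : x = z ∨ (HG n).Adj x z) :
    ∃ w : (HG n).Walk x z, w.length ≤ 1 ∧ (x = z → w.length = 0) := by
  rcases h with rfl | h
  · exact ⟨.nil, by simp, by simp⟩
  · exact ⟨.cons h .nil, by simp, fun he => absurd he h.ne⟩

private lemma dist_le_ham {n : ℕ} (x y : (Fin 2 × Fin 2) × Fin n) :
    (HG n).dist x y ≤ (if x.1.1 = y.1.1 then 0 else 1) + (if x.1.2 = y.1.2 then 0 else 1)
      + (if x.2 = y.2 then 0 else 1) := by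
  obtain ⟨⟨x1, x2⟩, x3⟩ := x
  obtain ⟨⟨y1, y2⟩, y3⟩ := y
  obtain ⟨w1, hw1, hw1'⟩ := step (((x1, x2)), x3) ((y1, x2), x3) (by
    by_cases h : x1 = y1
    · left; simp [h]
    · right; rw [hg_adj]; simp [h])
  obtain ⟨w2, hw2, hw2'⟩ := step ((y1, x2), x3) ((y1, y2), x3) (by
    by_cases h : x2 = y2
    · left; simp [h]
    · right; rw [hg_adj]; simp [h])
  obtain ⟨w3, hw3, hw3'⟩ := step ((y1, y2), x3) ((y1, y2), y3) (by
    by_cases h : x3 = y3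
    · left; simp [h]
    · right; rw [hg_adj]; simp [h])
  have e1 : w1.length ≤ if x1 = y1 then 0 else 1 := by
    split_ifs with h
    · exact le_of_eq (hw1' (by rw [h]))
    · exact hw1
  have e2 : w2.length ≤ if x2 = y2 then 0 else 1 := by
    split_ifs with h
    · exact le_of_eq (hw2' (by rw [h]))
    · exact hw2
  have e3 : w3.length ≤ if x3 = y3 then 0 else 1 := by
    split_ifs with h
    · exact le_of_eq (hw3' (by rw [h]))
    · exact hw3
  refine le_trans (dist_le ((w1.append w2).append w3)) ?_
  simp only [Walk.length_append]
  split_ifs at e1 e2 e3 ⊢ <;> omega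

private lemma dist_le_three {n : ℕ} (x y : (Fin 2 × Fin 2) × Fin n) :
    (HG n).dist x y ≤ 3 := by
  refine le_trans (dist_le_ham x y) ?_
  split_ifs <;> omega

set_option maxHeartbeats 1000000 in
private lemma path_struct {n : ℕ} {x y : (Fin 2 × Fin 2) × Fin n}
    (w : (HG n).Walk x y) (hd : w.length = (HG n).dist x y)
    (h4 : w.length = 3) :
    ∃ (ℓ ℓ' : Fin n) (B B' : Finset (Fin 2 × Fin 2)), ℓ ≠ ℓ' ∧
      B.Nonempty ∧ B'.Nonempty ∧ B.card ≤ 3 ∧ B'.card ≤ 3 ∧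
      Phi B + Phi B' = 1 ∧
      w.support.toFinset = B.image (fun s => (s, ℓ)) ∪ B'.image (fun s => (s, ℓ')) := by
  have key := dist_le_ham x y
  rw [← hd, h4] at key
  have hne1 : x.1.1 ≠ y.1.1 := by intro hc; rw [if_pos hc] at key; split_ifs at key <;> omega
  have hne2 : x.1.2 ≠ y.1.2 := by intro hc; rw [if_pos hc] at key; split_ifs at key <;> omega
  have hne3 : x.2 ≠ y.2 := by intro hc; rw [if_pos hc] at key; split_ifs at key <;> omega
  clear key hd
  cases w with
  | nil => simp at h4
  | cons h1 w =>
  rename_i v1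
  cases w with
  | nil => simp at h4
  | cons h2 w =>
  rename_i v2
  cases w with
  | nil => simp at h4
  | cons h3 w =>
  rename_i v3
  cases w with
  | cons h4' w => simp at h4
  | nil =>
  clear h4
  obtain ⟨⟨a0, b0⟩, c0⟩ := x
  obtain ⟨⟨a1, b1⟩, c1⟩ := v1
  obtain ⟨⟨a2, b2⟩, c2⟩ := v2
  obtain ⟨⟨a3, b3⟩, c3⟩ := y
  rw [hg_adj] at h1 h2 h3
  dsimp only at h1 h2 h3 hne1 hne2 hne3
  simp only [Walk.support_cons, Walk.support_nil]
  rcases h1 with ⟨p1, q1, r1⟩ | ⟨p1, q1, r1⟩ | ⟨p1, q1, r1⟩ <;>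
    rcases h2 with ⟨p2, q2, r2⟩ | ⟨p2, q2, r2⟩ | ⟨p2, q2, r2⟩ <;>
    rcases h3 with ⟨p3, q3, r3⟩ | ⟨p3, q3, r3⟩ | ⟨p3, q3, r3⟩ <;>
    try (exfalso; simp_all; done)
  all_goals subst_vars
  -- (1,2,3)
  · exact ⟨c2, c3, {(a0,b1),(a3,b1),(a3,b3)}, {(a3,b3)}, hne3, insert_nonempty _ _,
      singleton_nonempty _, card3' _ _ _, by simp,
      phi_move3 (a0,b1) (a3,b1) (a3,b3) (Or.inl ⟨p1, rfl⟩) (Or.inr ⟨rfl, q2⟩) hne1 hne2,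
      by ext z; simp <;> tauto⟩
  -- (1,3,2)
  · exact ⟨c1, c3, {(a0,b2),(a3,b2)}, {(a3,b2),(a3,b3)}, hne3, insert_nonempty _ _,
      insert_nonempty _ _, card2' _ _, card2' _ _,
      phi_move2 (a0,b2) (a3,b2) (a3,b3) (Or.inl ⟨p1, rfl⟩) (Or.inr ⟨rfl, q3⟩) hne1 hne2,
      by ext z; simp <;> tauto⟩
  -- (2,1,3)
  · exact ⟨c2, c3, {(a1,b0),(a1,b3),(a3,b3)}, {(a3,b3)}, hne3, insert_nonempty _ _,
      singleton_nonempty _, card3' _ _ _, by simp,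
      phi_move3 (a1,b0) (a1,b3) (a3,b3) (Or.inr ⟨rfl, q1⟩) (Or.inl ⟨p2, rfl⟩) hne1 hne2,
      by ext z; simp <;> tauto⟩
  -- (2,3,1)
  · exact ⟨c1, c3, {(a2,b0),(a2,b3)}, {(a2,b3),(a3,b3)}, hne3, insert_nonempty _ _,
      insert_nonempty _ _, card2' _ _, card2' _ _,
      phi_move2 (a2,b0) (a2,b3) (a3,b3) (Or.inr ⟨rfl, q1⟩) (Or.inl ⟨p3, rfl⟩) hne1 hne2,
      by ext z; simp <;> tauto⟩
  -- (3,1,2)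
  · exact ⟨c0, c3, {(a1,b2)}, {(a1,b2),(a3,b2),(a3,b3)}, hne3, singleton_nonempty _,
      insert_nonempty _ _, by simp, card3' _ _ _,
      phi_move1 (a1,b2) (a3,b2) (a3,b3) (Or.inl ⟨p2, rfl⟩) (Or.inr ⟨rfl, q3⟩) hne1 hne2,
      by ext z; simp <;> tauto⟩
  -- (3,2,1)
  · exact ⟨c0, c3, {(a2,b1)}, {(a2,b1),(a2,b3),(a3,b3)}, hne3, singleton_nonempty _,
      insert_nonempty _ _, by simp, card3' _ _ _,
      phi_move1 (a2,b1) (a2,b3) (a3,b3) (Or.inr ⟨rfl, q2⟩) (Or.inl ⟨p3, rfl⟩) hne1 hne2,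
      by ext z; simp <;> tauto⟩

set_option maxHeartbeats 1000000 in
set_option synthInstance.maxHeartbeats 400000 in
theorem stmt_15 (n₃ : ℕ) (h : 3 ≤ n₃) (hodd : Odd n₃) :
    n₃ + 1 ≤ isometricPathNumber
      (SimpleGraph.boxProd (SimpleGraph.boxProd (completeGraph (Fin 2)) (completeGraph (Fin 2))) (completeGraph (Fin n₃))) := by
  classical
  rw [isometricPathNumber]
  have hV : Fintype.card ((Fin 2 × Fin 2) × Fin n₃) = 4 * n₃ := by
    simp [Fintype.card_prod]
  refine le_csInf ⟨Fintype.card ((Fin 2 × Fin 2) × Fin n₃), ?_⟩ ?_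
  · -- nonempty: cover by single-vertex paths
    refine ⟨fun i => (Fintype.equivFin _).symm i, fun i => (Fintype.equivFin _).symm i,
      fun i => Walk.nil, fun i => ⟨Walk.IsPath.nil, by simp [SimpleGraph.dist_self]⟩, fun z => ?_⟩
    exact ⟨Fintype.equivFin _ z, by simp⟩
  intro k hkmem
  obtain ⟨u, v, p, hiso, hcov⟩ := hkmem
  by_contra hlt
  push_neg at hlt
  have hk : k ≤ n₃ := by omega
  set S : Fin k → Finset ((Fin 2 × Fin 2) × Fin n₃) := fun i => (p i).support.toFinset with hSdef
  have hcard : ∀ i, (S i).card = (p i).length + 1 := by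
    intro i
    rw [hSdef]
    rw [List.toFinset_card_of_nodup (hiso i).1.support_nodup]
    exact (p i).length_support
  have hcard4 : ∀ i, (S i).card ≤ 4 := by
    intro i
    have := dist_le_three (u i) (v i)
    have h2 : (p i).length = (HG n₃).dist (u i) (v i) := (hiso i).2
    rw [hcard i]; omega
  have hcovS : ∀ z, ∃ i, z ∈ S i := by
    intro z
    obtain ⟨i, hi⟩ := hcov z
    exact ⟨i, List.mem_toFinset.mpr hi⟩
  have hbi : (Finset.univ : Finset ((Fin 2 × Fin 2) × Fin n₃)) ⊆
      Finset.univ.biUnion S := by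
    intro z _
    obtain ⟨i, hi⟩ := hcovS z
    exact Finset.mem_biUnion.mpr ⟨i, Finset.mem_univ _, hi⟩
  have hlow : 4 * n₃ ≤ ∑ i, (S i).card := by
    calc 4 * n₃ = (Finset.univ : Finset ((Fin 2 × Fin 2) × Fin n₃)).card := by
          rw [Finset.card_univ, hV]
      _ ≤ (Finset.univ.biUnion S).card := Finset.card_le_card hbi
      _ ≤ ∑ i, (S i).card := Finset.card_biUnion_le
  have hhigh : ∑ i, (S i).card ≤ 4 * k := by
    calc ∑ i, (S i).card ≤ ∑ _i : Fin k, 4 := Finset.sum_le_sum (fun i _ => hcard4 i)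
      _ = 4 * k := by simp [mul_comm]
  have hkeq : k = n₃ := by omega
  have hsum : ∑ i, (S i).card = 4 * n₃ := by omega
  have hS4 : ∀ i, (S i).card = 4 := by
    by_contra hc
    push_neg at hc
    obtain ⟨i0, hi0⟩ := hc
    have : ∑ i, (S i).card < ∑ _i : Fin k, 4 := by
      refine Finset.sum_lt_sum (fun i _ => hcard4 i) ⟨i0, Finset.mem_univ _, ?_⟩
      have := hcard4 i0; omega
    simp [mul_comm] at this
    omega
  have hdisj : ∀ i j z, i ≠ j → z ∈ S i → z ∈ S j → False := by
    intro i j z hij hzi hzj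
    set T : Fin k → Finset ((Fin 2 × Fin 2) × Fin n₃) :=
      fun a => if a = j then S j \ {z} else S a with hT
    have hcovT : (Finset.univ : Finset ((Fin 2 × Fin 2) × Fin n₃)) ⊆
        Finset.univ.biUnion T := by
      intro y _
      obtain ⟨a, ha⟩ := hcovS y
      by_cases hyz : y = z
      · exact Finset.mem_biUnion.mpr ⟨i, Finset.mem_univ _, by
          simp only [hT, if_neg hij]; exact hyz ▸ hzi⟩
      · rcases eq_or_ne a j with rfl | haj
        · exact Finset.mem_biUnion.mpr ⟨a, Finset.mem_univ _, by
            simp only [hT, if_pos rfl, Finset.mem_sdiff, Finset.mem_singleton]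
            exact ⟨ha, hyz⟩⟩
        · exact Finset.mem_biUnion.mpr ⟨a, Finset.mem_univ _, by
            simp only [hT, if_neg haj]; exact ha⟩
    have hTj : (T j).card = (S j).card - 1 := by
      simp only [hT, if_pos rfl]
      rw [Finset.card_sdiff_of_subset (by simp [hzj])]
      simp
    have hTcard : ∑ a, (T a).card = (∑ a, (S a).card) - 1 := by
      rw [← Finset.sum_erase_add _ _ (Finset.mem_univ j),
        ← Finset.sum_erase_add _ _ (Finset.mem_univ j)]
      have he : ∑ a ∈ Finset.univ.erase j, (T a).card
          = ∑ a ∈ Finset.univ.erase j, (S a).card := by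
        refine Finset.sum_congr rfl (fun a ha => ?_)
        have : a ≠ j := (Finset.mem_erase.mp ha).1
        simp [hT, this]
      have hpos : 1 ≤ (S j).card := Finset.card_pos.mpr ⟨z, hzj⟩
      omega
    have : 4 * n₃ ≤ (∑ a, (S a).card) - 1 := by
      calc 4 * n₃ = (Finset.univ : Finset ((Fin 2 × Fin 2) × Fin n₃)).card := by
            rw [Finset.card_univ, hV]
        _ ≤ (Finset.univ.biUnion T).card := Finset.card_le_card hcovT
        _ ≤ ∑ a, (T a).card := Finset.card_biUnion_le
        _ = (∑ a, (S a).card) - 1 := hTcard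
    omega
  have plen : ∀ i, (p i).length = 3 := by
    intro i
    have := hcard i
    have := hS4 i
    omega
  choose L L' B B' hLL hBne hBne' hBc hBc' hphi hSeq using
    fun i => path_struct (p i) (hiso i).2 (plen i)
  have hAeq : ∀ i m, Aset (S i) m = if m = L i then B i else if m = L' i then B' i else ∅ :=
    fun i m => aset_eq (hLL i) (hSeq i) m
  have hAcard : ∀ i m, (Aset (S i) m).card ≤ 3 := by
    intro i m
    rw [hAeq i m]
    split_ifs
    · exact hBc i
    · exact hBc' i
    · simp
  have hsq : ∀ (m : Fin n₃) (s : Fin 2 × Fin 2), ∃ i, s ∈ Aset (S i) m := by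
    intro m s
    obtain ⟨i, hi⟩ := hcovS (s, m)
    exact ⟨i, mem_aset.mpr hi⟩
  set D : Fin n₃ → Finset (Fin k) :=
    fun m => Finset.univ.filter (fun i => m = L i ∨ m = L' i) with hD
  have hAD : ∀ i m, i ∉ D m → Aset (S i) m = ∅ := by
    intro i m him
    rw [hAeq i m]
    simp only [hD, Finset.mem_filter, Finset.mem_univ, true_and] at him
    push_neg at him
    rw [if_neg him.1, if_neg him.2]
  have hD2 : ∀ m, 2 ≤ (D m).card := by
    intro m
    have hsub : (Finset.univ : Finset (Fin 2 × Fin 2)) ⊆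
        (D m).biUnion (fun i => Aset (S i) m) := by
      intro s _
      obtain ⟨i, hi⟩ := hsq m s
      refine Finset.mem_biUnion.mpr ⟨i, ?_, hi⟩
      by_contra him
      rw [hAD i m him] at hi
      simp at hi
    have h4le : 4 ≤ 3 * (D m).card := by
      calc 4 = (Finset.univ : Finset (Fin 2 × Fin 2)).card := by decide
        _ ≤ ((D m).biUnion (fun i => Aset (S i) m)).card := Finset.card_le_card hsub
        _ ≤ ∑ i ∈ D m, (Aset (S i) m).card := Finset.card_biUnion_le
        _ ≤ ∑ _i ∈ D m, 3 := Finset.sum_le_sum (fun i _ => hAcard i m)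
        _ = 3 * (D m).card := by rw [Finset.sum_const, smul_eq_mul, mul_comm]
    omega
  have hDsum : ∑ m, (D m).card = 2 * k := by
    have : ∀ m, (D m).card = ∑ i : Fin k, if m = L i ∨ m = L' i then 1 else 0 := by
      intro m
      rw [hD]
      rw [Finset.card_filter]
    simp_rw [this]
    rw [Finset.sum_comm]
    have hinner : ∀ i : Fin k, (∑ m : Fin n₃, if m = L i ∨ m = L' i then 1 else 0) = 2 := by
      intro i
      rw [← Finset.card_filter]
      have : Finset.univ.filter (fun m => m = L i ∨ m = L' i) = {L i, L' i} := by
        ext m; simp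
      rw [this, Finset.card_insert_of_notMem (by simp [hLL i]), Finset.card_singleton]
    simp_rw [hinner]
    simp [mul_comm]
  have hD2' : ∀ m, (D m).card = 2 := by
    by_contra hc
    push_neg at hc
    obtain ⟨m0, hm0⟩ := hc
    have : 2 * n₃ < ∑ m, (D m).card := by
      calc 2 * n₃ = ∑ _m : Fin n₃, 2 := by simp [mul_comm]
        _ < ∑ m, (D m).card := by
            refine Finset.sum_lt_sum (fun m _ => hD2 m) ⟨m0, Finset.mem_univ _, ?_⟩
            have := hD2 m0; omega
    omega
  -- per-level sum is 0
  have hlev : ∀ m, ∑ i, Phi (Aset (S i) m) = 0 := by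
    intro m
    obtain ⟨i1, i2, hne12, hDm⟩ := Finset.card_eq_two.mp (hD2' m)
    have hz : ∀ j, j ≠ i1 → j ≠ i2 → Aset (S j) m = ∅ := by
      intro j h1 h2
      refine hAD j m ?_
      rw [hDm]
      simp [h1, h2]
    have hsub : ∀ s : Fin 2 × Fin 2, s ∈ Aset (S i1) m ∨ s ∈ Aset (S i2) m := by
      intro s
      obtain ⟨i, hi⟩ := hsq m s
      have him : i ∈ D m := by
        by_contra him
        rw [hAD i m him] at hi
        simp at hi
      rw [hDm] at him
      simp only [Finset.mem_insert, Finset.mem_singleton] at him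
      rcases him with rfl | rfl
      · exact Or.inl hi
      · exact Or.inr hi
    have hA2 : Aset (S i2) m = (Aset (S i1) m)ᶜ := by
      ext s
      simp only [Finset.mem_compl]
      constructor
      · intro h2 h1
        exact hdisj i1 i2 (s, m) hne12 (mem_aset.mp h1) (mem_aset.mp h2)
      · intro h1
        rcases hsub s with hs | hs
        · exact absurd hs h1
        · exact hs
    rw [Finset.sum_eq_add i1 i2 hne12
      (fun j _ hj => by rw [hz j hj.1 hj.2, phi_empty])
      (fun hn => absurd (Finset.mem_univ i1) hn)
      (fun hn => absurd (Finset.mem_univ i2) hn)]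
    rw [hA2]
    exact phi_compl _
  -- per-path sum is 1
  have hpath : ∀ i, ∑ m, Phi (Aset (S i) m) = 1 := by
    intro i
    rw [Finset.sum_eq_add (L i) (L' i) (hLL i)
      (fun m _ hm => by
        rw [hAeq i m, if_neg hm.1, if_neg hm.2, phi_empty])
      (fun hn => absurd (Finset.mem_univ _) hn)
      (fun hn => absurd (Finset.mem_univ _) hn)]
    rw [hAeq i (L i), if_pos rfl, hAeq i (L' i), if_neg (Ne.symm (hLL i)), if_pos rfl]
    exact hphi i
  -- double counting
  have hzero : (0 : ZMod 2) = (k : ZMod 2) := by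
    calc (0 : ZMod 2) = ∑ m : Fin n₃, (0 : ZMod 2) := by simp
      _ = ∑ m : Fin n₃, ∑ i, Phi (Aset (S i) m) := by
          refine Finset.sum_congr rfl (fun m _ => (hlev m).symm)
      _ = ∑ i, ∑ m : Fin n₃, Phi (Aset (S i) m) := Finset.sum_comm
      _ = ∑ _i : Fin k, (1 : ZMod 2) := Finset.sum_congr rfl (fun i _ => hpath i)
      _ = (k : ZMod 2) := by simp
  rw [hkeq] at hzero
  have hdvd : (2 : ℕ) ∣ n₃ := by
    have := (ZMod.natCast_eq_zero_iff n₃ 2).mp hzero.symm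
    exact this
  obtain ⟨t, ht⟩ := hodd
  omega
end
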